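/- arXiv:2205.04776 — 10 statements merged into one kernel-verified Lean document; each statement's English description precedes it below -/
import Mathlib

section
/- For all integers n ≥ 1 and d ≥ 1 there exists an integer N = N(n,d) ≥ 1 such that every set of N points in ℝ^d in general position contains a subset of n points that is in strong general position. -/
open Finset

/-- Points of `ℝ^d`. -/
abbrev Pt (d : ℕ) := Fin d → ℝ

/-- `W` is a `d`-colorful word on alphabet `σ`: it has length `(d+1)(|σ|-1)+1`
(length `0` if `σ = ∅`), and each of the `d+1` blocks of consecutive positions
`i(|σ|-1), …, i(|σ|-1)+|σ|-1` (0-indexed, `0 ≤ i ≤ d`) contains every letter of `σ`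
exactly once. -/
def IsColorfulWord {α : Type*} [DecidableEq α] (d : ℕ) (σ : Finset α) (W : List α) : Prop :=
  W.length = (d + 1) * (σ.card - 1) + min σ.card 1 ∧
    ∀ i ≤ d, ∀ a ∈ σ, ((W.drop (i * (σ.card - 1))).take σ.card).count a = 1

/-- `W` contains a `d`-colorful subword on alphabet `σ`. -/
def ContainsColorful {α : Type*} [DecidableEq α] (d : ℕ) (σ : Finset α) (W : List α) : Prop :=
  ∃ W' : List α, W'.Sublist W ∧ IsColorfulWord d σ W'

/-- A complex `Δ` on vertex set `V` is `d`-colorfully representable. -/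
def ColorfullyRep {V : Type*} [DecidableEq V] (d : ℕ) (Δ : Set (Finset V)) : Prop :=
  ∃ W : List V, ∀ σ : Finset V, σ ∈ Δ ↔ ContainsColorful d σ W

/-- A finite point set in `ℝ^d` is in general position: every subset of at most `d+1`
points is affinely independent. -/
def GenPos {d : ℕ} (P : Finset (Pt d)) : Prop :=
  ∀ S : Finset (Pt d), S ⊆ P → S.card ≤ d + 1 →
    AffineIndependent ℝ (fun x : (S : Set (Pt d)) => (x : Pt d))

/-- Pairwise disjoint finite sets `Q 1, …, Q n` induce the complex `Δ`:
for every `σ ⊆ [n]`, the convex hulls of the `Q i`, `i ∈ σ`, have a common point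
iff `σ ∈ Δ`. -/
def Induces {d n : ℕ} (Δ : Set (Finset (Fin n))) (Q : Fin n → Finset (Pt d)) : Prop :=
  (∀ i j : Fin n, i ≠ j → Disjoint (Q i) (Q j)) ∧
    ∀ σ : Finset (Fin n), (⋂ i ∈ σ, convexHull ℝ ((Q i : Set (Pt d)))).Nonempty ↔ σ ∈ Δ

/-- `Δ` is weakly `d`-Tverberg. -/
def WeaklyTverberg (d : ℕ) {n : ℕ} (Δ : Set (Finset (Fin n))) : Prop :=
  ∃ C : ℕ, ∀ P : Finset (Pt d), GenPos P → C ≤ P.card →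
    ∃ Q : Fin n → Finset (Pt d), (∀ i, Q i ⊆ P) ∧ Induces Δ Q

/-- `Δ` is `d`-Tverberg: the inducing sets can be chosen to partition all of `P`. -/
def IsTverberg (d : ℕ) {n : ℕ} (Δ : Set (Finset (Fin n))) : Prop :=
  ∃ C : ℕ, ∀ P : Finset (Pt d), GenPos P → C ≤ P.card →
    ∃ Q : Fin n → Finset (Pt d), (∀ i, Q i ⊆ P) ∧ (∀ x ∈ P, ∃ i, x ∈ Q i) ∧ Induces Δ Q

/-- Strong general position. -/
def StrongGenPos {d : ℕ} (P : Finset (Pt d)) : Prop :=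
  ∀ r : ℕ, 2 ≤ r → ∀ Q : Fin r → Finset (Pt d),
    (∀ i, Q i ⊆ P) → (∀ i, (Q i).Nonempty) →
    (∀ i j, i ≠ j → Disjoint (Q i) (Q j)) →
    (⨅ i, affineSpan ℝ ((Q i : Set (Pt d)))) = ⊥ ∨
      (Module.finrank ℝ (⨅ i, affineSpan ℝ ((Q i : Set (Pt d)))).direction : ℤ) =
        (∑ i, (Module.finrank ℝ (affineSpan ℝ ((Q i : Set (Pt d)))).direction : ℤ)) -
          (d : ℤ) * ((r : ℤ) - 1)

/-- `σ` is a facet (maximal face) of `Δ`. -/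
def IsFacet {n : ℕ} (Δ : Set (Finset (Fin n))) (σ : Finset (Fin n)) : Prop :=
  σ ∈ Δ ∧ ∀ τ ∈ Δ, σ ⊆ τ → σ = τ

/-- The simplicial complex associated to a graph: the empty set, the vertex singletons,
and the edges. -/
def graphComplex {V : Type*} (G : SimpleGraph V) : Set (Finset V) :=
  {σ : Finset V | σ.card ≤ 2 ∧ ∀ a ∈ σ, ∀ b ∈ σ, a ≠ b → G.Adj a b}

/-- The disjoint subsequences of `p` indexed by `T` form a Tverberg partition. -/
def TvPt {d m r : ℕ} (p : Fin m → Pt d) (T : Fin r → Finset (Fin m)) : Prop :=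
  (⋂ i : Fin r, convexHull ℝ (p '' (T i : Set (Fin m)))).Nonempty

/-- A minimal Tverberg partition: deleting any single point destroys the common point. -/
def MinTv {d m r : ℕ} (p : Fin m → Pt d) (T : Fin r → Finset (Fin m)) : Prop :=
  TvPt p T ∧ ∀ i : Fin r, ∀ x ∈ T i, ¬ TvPt p (fun j => (T j).erase x)

/-- The word on alphabet `{1,…,r}` associated to disjoint subsequences `T` of a sequence
of length `m`: each index belonging to `T i` is replaced by the letter `i`, read in order. -/
noncomputable def assocWord {m r : ℕ} (T : Fin r → Finset (Fin m)) : List (Fin r) :=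
  (List.finRange m).filterMap (fun k =>
    if h : ∃ i, k ∈ T i then some h.choose else none)

section Aux
open Module AffineSubspace
variable {d : ℕ}


variable {d : ℕ}

-- membership in iInf of affine subspaces
lemma mem_iInf_aff {ι : Sort*} (f : ι → AffineSubspace ℝ (Pt d)) (x : Pt d) :
    x ∈ ⨅ i, f i ↔ ∀ i, x ∈ f i := by
  constructor
  · exact fun h i => (iInf_le f i) h
  · intro h
    have : affineSpan ℝ {x} ≤ ⨅ i, f i :=
      le_iInf fun i => (affineSpan_le).2 (Set.singleton_subset_iff.2 (h i))
    exact this (mem_affineSpan ℝ rfl)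

-- Finset.inf over univ equals iInf
lemma inf_univ_eq {ι : Type*} [Fintype ι] (f : ι → AffineSubspace ℝ (Pt d)) :
    Finset.univ.inf f = ⨅ i, f i :=
  le_antisymm (le_iInf fun i => Finset.inf_le (mem_univ i))
    (Finset.le_inf fun i _ => iInf_le f i)

-- affine subspace of full dim is top
lemma eq_top_of_dim (V : AffineSubspace ℝ (Pt d)) (hne : (V : Set (Pt d)).Nonempty)
    (h : finrank ℝ V.direction = d) : V = ⊤ := by
  obtain ⟨p, hp⟩ := hne
  have hdir : V.direction = ⊤ := by
    apply Submodule.eq_top_of_finrank_eq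
    rw [h, finrank_fin_fun]
  ext z
  simp only [mem_top, iff_true]
  rw [← vsub_right_mem_direction_iff_mem hp z, hdir]
  exact Submodule.mem_top

-- dim formula
lemma dim_formula (V W : AffineSubspace ℝ (Pt d)) {p : Pt d} (hp : p ∈ V ⊓ W) :
    finrank ℝ (V ⊔ W).direction + finrank ℝ (V ⊓ W).direction
      = finrank ℝ V.direction + finrank ℝ W.direction := by
  obtain ⟨h1, h2⟩ := (mem_inf_iff p V W).1 hp
  rw [direction_inf_of_mem h1 h2, direction_sup h1 h2]
  have hz : (ℝ ∙ (p -ᵥ p) : Submodule ℝ (Pt d)) = ⊥ := by simp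
  rw [hz, sup_bot_eq]
  exact Submodule.finrank_sup_add_finrank_inf_eq _ _

-- adding a point outside increases dim by 1
lemma dim_insert (A : AffineSubspace ℝ (Pt d)) {p : Pt d} (hp : p ∈ A) {x : Pt d}
    (hx : x ∉ A) :
    finrank ℝ (affineSpan ℝ (insert x (A : Set (Pt d)))).direction
      = finrank ℝ A.direction + 1 := by
  rw [direction_affineSpan_insert hp]
  have hv : x -ᵥ p ∉ A.direction := by
    intro h
    exact hx (by simpa using vadd_mem_of_mem_direction h hp)
  have hbot : (Submodule.span ℝ {x -ᵥ p}) ⊓ A.direction = ⊥ := by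
    rw [Submodule.eq_bot_iff]
    rintro w ⟨hw1, hw2⟩
    obtain ⟨c, rfl⟩ := Submodule.mem_span_singleton.1 hw1
    rcases eq_or_ne c 0 with rfl | hc
    · simp
    · refine absurd ?_ hv
      have h2 := A.direction.smul_mem c⁻¹ hw2
      rwa [smul_smul, inv_mul_cancel₀ hc, one_smul] at h2
  have hne : x -ᵥ p ≠ 0 := fun h => hx (by rw [vsub_eq_zero_iff_eq] at h; rwa [h])
  have := Submodule.finrank_sup_add_finrank_inf_eq (Submodule.span ℝ {x -ᵥ p}) A.direction
  rw [hbot, finrank_span_singleton hne] at this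
  simp only [finrank_bot, add_zero] at this
  omega

-- exchange lemma
lemma exchange (A : AffineSubspace ℝ (Pt d)) {p : Pt d} (hp : p ∈ A) {x y : Pt d}
    (hy : y ∈ affineSpan ℝ (insert x (A : Set (Pt d)))) (hyA : y ∉ A) :
    x ∈ affineSpan ℝ (insert y (A : Set (Pt d))) := by
  obtain ⟨r, p0, hp0, hyeq⟩ := (mem_affineSpan_insert_iff hp x y).1 hy
  have hr : r ≠ 0 := by
    rintro rfl
    apply hyA
    rw [hyeq, zero_smul, zero_vadd]
    exact hp0
  refine (mem_affineSpan_insert_iff hp0 y x).2 ⟨r⁻¹, p, hp, ?_⟩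
  have : y -ᵥ p0 = r • (x -ᵥ p) := by rw [hyeq]; exact vadd_vsub _ _
  rw [this, smul_smul, inv_mul_cancel₀ hr, one_smul, vsub_vadd]

lemma csl_empty (B : AffineSubspace ℝ (Pt d)) (hB : (B : Set (Pt d)).Nonempty) (x : Pt d)
    (hJ : B = ⊤ ∨ x ∉ B) :
    B ⊓ affineSpan ℝ ({x} : Set (Pt d)) = ⊥ ∨
      (finrank ℝ (B ⊓ affineSpan ℝ ({x} : Set (Pt d))).direction : ℤ)
        = finrank ℝ B.direction - d := by
  rcases hJ with hJ | hJ
  · right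
    rw [hJ, top_inf_eq, direction_affineSpan, vectorSpan_singleton, direction_top,
      finrank_bot, finrank_top, finrank_fin_fun]
    simp
  · left
    rw [← coe_eq_bot_iff]
    ext z
    simp only [Set.mem_empty_iff_false, iff_false]
    intro hz
    obtain ⟨hz1, hz2⟩ := (mem_inf_iff z _ _).1 hz
    have hzx : z = x := by
      have h := hz2
      rw [← AffineSubspace.mem_coe, coe_affineSpan_singleton, Set.mem_singleton_iff] at h
      exact h
    exact hJ (hzx ▸ hz1)

lemma csl (B A' : AffineSubspace ℝ (Pt d))
    (hB : (B : Set (Pt d)).Nonempty) (hA : (A' : Set (Pt d)).Nonempty) (x : Pt d)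
    (hxA : x ∉ A') (hJ : A' ⊔ B = ⊤ ∨ x ∉ A' ⊔ B)
    (inv1 : B ⊓ A' = ⊥ ∨ (finrank ℝ (B ⊓ A').direction : ℤ)
        = finrank ℝ B.direction + finrank ℝ A'.direction - d) :
    B ⊓ affineSpan ℝ (insert x (A' : Set (Pt d))) = ⊥ ∨
      (finrank ℝ (B ⊓ affineSpan ℝ (insert x (A' : Set (Pt d)))).direction : ℤ)
        = finrank ℝ B.direction + finrank ℝ A'.direction + 1 - d := by
  set A'' := affineSpan ℝ (insert x (A' : Set (Pt d))) with hA''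
  obtain ⟨p, hpA⟩ := hA
  have hA'le : A' ≤ A'' := by
    calc A' = affineSpan ℝ (A' : Set (Pt d)) := (affineSpan_coe A').symm
    _ ≤ A'' := affineSpan_mono ℝ (Set.subset_insert _ _)
  have hdup : finrank ℝ A''.direction = finrank ℝ A'.direction + 1 := dim_insert A' hpA hxA
  by_cases hBA : ((B ⊓ A' : AffineSubspace ℝ (Pt d)) : Set (Pt d)).Nonempty
  · -- case (i): B and A' meet; then A' ⊔ B = ⊤ automatically
    obtain ⟨q, hq⟩ := hBA
    have hinv : (finrank ℝ (B ⊓ A').direction : ℤ)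
        = finrank ℝ B.direction + finrank ℝ A'.direction - d := by
      rcases inv1 with h | h
      · rw [h] at hq; exact absurd hq (by simp)
      · exact h
    have hsup : B ⊔ A' = ⊤ := by
      apply eq_top_of_dim _ ⟨q, (le_sup_left : B ≤ B ⊔ A') ((mem_inf_iff q _ _).1 hq).1⟩
      have hf := dim_formula B A' hq
      have hle : finrank ℝ (B ⊔ A').direction ≤ d := by
        have := Submodule.finrank_le (B ⊔ A').direction
        rwa [finrank_fin_fun] at this
      omega
    have hsup'' : B ⊔ A'' = ⊤ :=
      top_le_iff.1 (hsup ▸ sup_le_sup_left hA'le B)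
    have hq'' : q ∈ B ⊓ A'' := by
      obtain ⟨h1, h2⟩ := (mem_inf_iff q _ _).1 hq
      exact (mem_inf_iff q _ _).2 ⟨h1, hA'le h2⟩
    right
    have hf := dim_formula B A'' hq''
    rw [hsup'', direction_top, finrank_top, finrank_fin_fun, hdup] at hf
    omega
  · -- case (ii): B ∩ A' = ∅
    rcases hJ with hJ | hJ
    · -- J = ⊤
      by_cases hne : ((B ⊓ A'' : AffineSubspace ℝ (Pt d)) : Set (Pt d)).Nonempty
      · obtain ⟨q, hq⟩ := hne
        right
        have hsup'' : B ⊔ A'' = ⊤ := by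
          rw [← top_le_iff, ← hJ]
          exact sup_le (hA'le.trans le_sup_right) le_sup_left
        have hf := dim_formula B A'' hq
        rw [hsup'', direction_top, finrank_top, finrank_fin_fun, hdup] at hf
        omega
      · left
        rw [← coe_eq_bot_iff]
        exact Set.not_nonempty_iff_eq_empty.1 hne
    · -- x ∉ A' ⊔ B : intersection must be empty
      left
      rw [← coe_eq_bot_iff]
      ext z
      simp only [Set.mem_empty_iff_false, iff_false]
      intro hz
      obtain ⟨hz1, hz2⟩ := (mem_inf_iff z _ _).1 hz
      have hzA : z ∉ A' := by
        intro h
        exact hBA ⟨z, (mem_inf_iff z _ _).2 ⟨hz1, h⟩⟩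
      have hxmem : x ∈ affineSpan ℝ (insert z (A' : Set (Pt d))) :=
        exchange A' hpA hz2 hzA
      apply hJ
      have : affineSpan ℝ (insert z (A' : Set (Pt d))) ≤ A' ⊔ B := by
        apply affineSpan_le.2
        rw [Set.insert_subset_iff]
        exact ⟨(le_sup_right : B ≤ A' ⊔ B) hz1,
          fun w hw => (le_sup_left : A' ≤ A' ⊔ B) hw⟩
      exact this hxmem


lemma sgp_one {S : Finset (Pt d)} (hS : StrongGenPos S) (r : ℕ) (hr : 1 ≤ r)
    (Q : Fin r → Finset (Pt d)) (h1 : ∀ i, Q i ⊆ S) (h2 : ∀ i, (Q i).Nonempty)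
    (h3 : ∀ i j, i ≠ j → Disjoint (Q i) (Q j)) :
    (⨅ i, affineSpan ℝ ((Q i : Set (Pt d)))) = ⊥ ∨
      (Module.finrank ℝ (⨅ i, affineSpan ℝ ((Q i : Set (Pt d)))).direction : ℤ) =
        (∑ i, (Module.finrank ℝ (affineSpan ℝ ((Q i : Set (Pt d)))).direction : ℤ)) -
          (d : ℤ) * ((r : ℤ) - 1) := by
  rcases eq_or_lt_of_le hr with hr1 | hr2
  · right
    obtain rfl : r = 1 := hr1.symm
    have he : (⨅ i : Fin 1, affineSpan ℝ ((Q i : Set (Pt d))))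
        = affineSpan ℝ ((Q 0 : Set (Pt d))) :=
      le_antisymm (iInf_le _ 0) (le_iInf fun i => by rw [Subsingleton.elim i 0])
    rw [he, Fin.sum_univ_one]
    push_cast
    ring
  · exact hS r hr2 Q h1 h2 h3

-- splitting an iInf over Fin (m+1)
lemma aff_iInf_split {m : ℕ} (i0 : Fin (m + 1)) (f : Fin (m + 1) → AffineSubspace ℝ (Pt d)) :
    ⨅ i, f i = (Finset.univ.inf fun j : Fin m => f (i0.succAbove j)) ⊓ f i0 := by
  apply le_antisymm
  · exact le_inf (Finset.le_inf fun j _ => iInf_le f _) (iInf_le f i0)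
  · apply le_iInf
    intro i
    rcases eq_or_ne i i0 with rfl | h
    · exact inf_le_right
    · obtain ⟨j, rfl⟩ := Fin.exists_succAbove_eq h
      exact inf_le_left.trans (Finset.inf_le (mem_univ j))

open Module

noncomputable def Jsp {d : ℕ} (T' : Finset (Pt d)) (F : Finset (Finset (Pt d))) :
    AffineSubspace ℝ (Pt d) :=
  affineSpan ℝ (T' : Set (Pt d)) ⊔ F.inf (fun A => affineSpan ℝ (A : Set (Pt d)))

lemma inv_helper {S : Finset (Pt d)} (hS : StrongGenPos S) {m : ℕ} (hm : 1 ≤ m)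
    (i0 : Fin (m + 1)) (Q : Fin (m + 1) → Finset (Pt d)) (T' : Finset (Pt d))
    (hT'S : T' ⊆ S) (hT'ne : T'.Nonempty) (hT'sub : T' ⊆ Q i0)
    (hQS : ∀ i, i ≠ i0 → Q i ⊆ S) (hQne : ∀ i, (Q i).Nonempty)
    (hQdisj : ∀ i j, i ≠ j → Disjoint (Q i) (Q j)) :
    (Finset.univ.inf fun j : Fin m =>
        affineSpan ℝ ((Q (i0.succAbove j) : Set (Pt d)))) ⊓ affineSpan ℝ (T' : Set (Pt d)) = ⊥ ∨
      (finrank ℝ ((Finset.univ.inf fun j : Fin m =>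
          affineSpan ℝ ((Q (i0.succAbove j) : Set (Pt d)))) ⊓
            affineSpan ℝ (T' : Set (Pt d))).direction : ℤ) =
        (finrank ℝ (affineSpan ℝ (T' : Set (Pt d))).direction : ℤ) +
          (∑ j, (finrank ℝ (affineSpan ℝ ((Q (i0.succAbove j) : Set (Pt d)))).direction : ℤ)) -
            d * m := by
  classical
  set Q' : Fin (m + 1) → Finset (Pt d) := Function.update Q i0 T' with hQ'
  have hne' : ∀ i, i ≠ i0 → Q' i = Q i := fun i h => Function.update_of_ne h _ _
  have h0 : Q' i0 = T' := Function.update_self i0 T' Q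
  have hup : ∀ j : Fin m, Q' (i0.succAbove j) = Q (i0.succAbove j) := fun j =>
    hne' _ (Fin.succAbove_ne i0 j)
  have hsub : ∀ a, Q' a ⊆ Q a := fun a => by
    rcases eq_or_ne a i0 with rfl | h
    · rw [h0]; exact hT'sub
    · rw [hne' a h]
  have hres := sgp_one hS (m + 1) (by omega) Q'
    (fun i => by
      rcases eq_or_ne i i0 with rfl | h
      · rw [h0]; exact hT'S
      · rw [hne' i h]; exact hQS i h)
    (fun i => by
      rcases eq_or_ne i i0 with rfl | h
      · rw [h0]; exact hT'ne
      · rw [hne' i h]; exact hQne i)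
    (fun i j hij => (hQdisj i j hij).mono (hsub i) (hsub j))
  rw [aff_iInf_split i0 (fun i => affineSpan ℝ ((Q' i : Set (Pt d)))),
    Fin.sum_univ_succAbove
      (fun i => ((finrank ℝ (affineSpan ℝ ((Q' i : Set (Pt d)))).direction : ℤ))) i0] at hres
  have einf : (Finset.univ.inf fun j : Fin m =>
      affineSpan ℝ ((Q' (i0.succAbove j) : Set (Pt d))))
      = Finset.univ.inf fun j : Fin m =>
        affineSpan ℝ ((Q (i0.succAbove j) : Set (Pt d))) := by
    simp only [hup]
  have e0 : affineSpan ℝ ((Q' i0 : Set (Pt d))) = affineSpan ℝ (T' : Set (Pt d)) := by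
    rw [h0]
  have esum : (∑ i, (finrank ℝ (affineSpan ℝ ((Q' (i0.succAbove i) : Set (Pt d)))).direction : ℤ))
      = ∑ j, (finrank ℝ (affineSpan ℝ ((Q (i0.succAbove j) : Set (Pt d)))).direction : ℤ) :=
    Finset.sum_congr rfl (fun i _ => by rw [hup i])
  rw [einf, e0, esum] at hres
  rcases hres with h | h
  · exact Or.inl h
  · right
    rw [h]
    push_cast
    ring

lemma extend (S : Finset (Pt d)) (hS : StrongGenPos S) (x : Pt d)
    (hx : ∀ T' ∈ S.powerset, ∀ F ∈ S.powerset.powerset, Jsp T' F = ⊤ ∨ x ∉ Jsp T' F) :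
    StrongGenPos (insert x S) := by
  classical
  intro r hr Q hQsub hQne hQdisj
  by_cases hxQ : ∃ i, x ∈ Q i
  case neg =>
    push_neg at hxQ
    apply hS r hr Q _ hQne hQdisj
    intro i y hy
    rcases Finset.mem_insert.1 (hQsub i hy) with rfl | h
    · exact absurd hy (hxQ i)
    · exact h
  obtain ⟨i0, hx0⟩ := hxQ
  obtain ⟨m, rfl⟩ : ∃ m, r = m + 1 := ⟨r - 1, by omega⟩
  have hm : 1 ≤ m := by omega
  have hQS : ∀ i, i ≠ i0 → Q i ⊆ S := by
    intro i hi y hy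
    rcases Finset.mem_insert.1 (hQsub i hy) with rfl | h
    · exact absurd hy (Finset.disjoint_left.1 (hQdisj i0 i (Ne.symm hi)) hx0)
    · exact h
  set B : AffineSubspace ℝ (Pt d) :=
    Finset.univ.inf (fun j : Fin m => affineSpan ℝ ((Q (i0.succAbove j) : Set (Pt d)))) with hB
  have hsplit := aff_iInf_split i0 (fun i => affineSpan ℝ ((Q i : Set (Pt d))))
  beta_reduce at hsplit
  rw [← hB] at hsplit
  have hsum := Fin.sum_univ_succAbove
    (fun i => ((finrank ℝ (affineSpan ℝ ((Q i : Set (Pt d)))).direction : ℤ))) i0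
  beta_reduce at hsum
  by_cases hBne : (B : Set (Pt d)).Nonempty
  case neg =>
    left
    rw [hsplit]
    have hb : B = ⊥ := by
      rw [← AffineSubspace.coe_eq_bot_iff]
      exact Set.not_nonempty_iff_eq_empty.1 hBne
    rw [hb, bot_inf_eq]
  have hBiInf : B = ⨅ j, affineSpan ℝ ((Q (i0.succAbove j) : Set (Pt d))) := inf_univ_eq _
  have hRdis : ∀ j k : Fin m, j ≠ k → Disjoint (Q (i0.succAbove j)) (Q (i0.succAbove k)) :=
    fun j k hjk => hQdisj _ _ (fun h => hjk (Fin.succAbove_right_injective h))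
  have hRsub : ∀ j : Fin m, Q (i0.succAbove j) ⊆ S := fun j => hQS _ (Fin.succAbove_ne i0 j)
  have hBdim := sgp_one hS m hm (fun j => Q (i0.succAbove j)) hRsub (fun j => hQne _) hRdis
  beta_reduce at hBdim
  rw [← hBiInf] at hBdim
  have hBd : (finrank ℝ B.direction : ℤ)
      = (∑ j, (finrank ℝ (affineSpan ℝ ((Q (i0.succAbove j) : Set (Pt d)))).direction : ℤ))
        - d * ((m : ℤ) - 1) := by
    rcases hBdim with h | h
    · rw [h] at hBne; simp at hBne
    · exact h
  set T' := (Q i0).erase x with hT'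
  have hT'S : T' ⊆ S := by
    intro y hy
    obtain ⟨hyx, hyQ⟩ := Finset.mem_erase.1 hy
    rcases Finset.mem_insert.1 (hQsub i0 hyQ) with rfl | h
    · exact absurd rfl hyx
    · exact h
  have hQ0 : ((Q i0 : Finset (Pt d)) : Set (Pt d)) = insert x (T' : Set (Pt d)) := by
    rw [hT', ← Finset.coe_insert, Finset.insert_erase hx0]
  set A' : AffineSubspace ℝ (Pt d) := affineSpan ℝ (T' : Set (Pt d)) with hA'
  have hJ : A' ⊔ B = ⊤ ∨ x ∉ A' ⊔ B := by
    have h1 : T' ∈ S.powerset := Finset.mem_powerset.2 hT'S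
    have h2 : Finset.univ.image (fun j => Q (i0.succAbove j)) ∈ S.powerset.powerset := by
      rw [Finset.mem_powerset]
      intro A hA
      obtain ⟨j, _, rfl⟩ := Finset.mem_image.1 hA
      exact Finset.mem_powerset.2 (hRsub j)
    have h3 := hx T' h1 _ h2
    have h4 : Jsp T' (Finset.univ.image (fun j => Q (i0.succAbove j))) = A' ⊔ B := by
      rw [Jsp, Finset.inf_image, hB, hA']
      rfl
    rwa [h4] at h3
  by_cases hxA : x ∈ A'
  · -- x already in the span of the rest of Q i0
    have hAr : affineSpan ℝ ((Q i0 : Set (Pt d))) = A' := by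
      rw [hQ0, hA']
      refine le_antisymm (affineSpan_le.2 ?_) (affineSpan_mono ℝ (Set.subset_insert _ _))
      rw [Set.insert_subset_iff]
      exact ⟨by rw [← hA']; exact hxA, subset_affineSpan ℝ _⟩
    have hT'ne : T'.Nonempty := by
      rcases Finset.eq_empty_or_nonempty T' with h | h
      · exfalso
        rw [hA', h] at hxA
        simp only [Finset.coe_empty, AffineSubspace.span_empty] at hxA
        exact AffineSubspace.notMem_bot ℝ (Pt d) x hxA
      · exact h
    have hinv := inv_helper hS hm i0 Q T' hT'S hT'ne (Finset.erase_subset _ _) hQS hQne hQdisj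
    rw [← hB, ← hA'] at hinv
    rcases hinv with h | h
    · left
      rw [hsplit, hAr]
      exact h
    · right
      rw [hsplit, hAr, h, hsum, hAr]
      push_cast
      ring
  · rcases Finset.eq_empty_or_nonempty T' with hT'e | hT'ne
    · -- Q i0 = {x}
      have hA'bot : A' = ⊥ := by
        rw [hA', hT'e]
        simp
      have q0span : affineSpan ℝ ((Q i0 : Set (Pt d))) = affineSpan ℝ ({x} : Set (Pt d)) := by
        rw [hQ0, hT'e]
        simp
      have hJ' : B = ⊤ ∨ x ∉ B := by
        rcases hJ with h | h
        · left; rwa [hA'bot, bot_sup_eq] at h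
        · right; intro hxB; exact h (by rw [hA'bot, bot_sup_eq]; exact hxB)
      have hcsl := csl_empty B hBne x hJ'
      rw [hsplit, q0span]
      rcases hcsl with h | h
      · exact Or.inl h
      · right
        have hz : finrank ℝ (affineSpan ℝ ({x} : Set (Pt d))).direction = 0 := by
          rw [direction_affineSpan, vectorSpan_singleton, finrank_bot]
        rw [h, hsum, q0span, hz]
        push_cast at hBd ⊢
        linarith [hBd]
    · -- main case
      obtain ⟨p, hpT⟩ := hT'ne
      have hpA : p ∈ A' := by
        rw [hA']
        exact subset_affineSpan ℝ _ (Finset.mem_coe.2 hpT)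
      have hinv := inv_helper hS hm i0 Q T' hT'S ⟨p, hpT⟩ (Finset.erase_subset _ _) hQS hQne hQdisj
      rw [← hB, ← hA'] at hinv
      have inv1 : B ⊓ A' = ⊥ ∨ (finrank ℝ (B ⊓ A').direction : ℤ)
          = finrank ℝ B.direction + finrank ℝ A'.direction - d := by
        rcases hinv with h | h
        · exact Or.inl h
        · right
          rw [h]
          push_cast at hBd ⊢
          linarith [hBd]
      have hcsl := csl B A' hBne ⟨p, hpA⟩ x hxA hJ inv1
      have hspan : affineSpan ℝ (insert x (A' : Set (Pt d)))
          = affineSpan ℝ ((Q i0 : Set (Pt d))) := by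
        rw [hQ0, hA']
        exact affineSpan_insert_affineSpan _ _ _
      have hdim0 : finrank ℝ (affineSpan ℝ ((Q i0 : Set (Pt d)))).direction
          = finrank ℝ A'.direction + 1 := by
        rw [← hspan]
        exact dim_insert A' hpA hxA
      rw [hspan] at hcsl
      rw [hsplit]
      rcases hcsl with h | h
      · exact Or.inl h
      · right
        rw [h, hsum, hdim0]
        push_cast at hBd ⊢
        linarith [hBd]



open scoped Classical in
lemma card_filter_le {P : Finset (Pt d)} (hP : GenPos P) {J : AffineSubspace ℝ (Pt d)}
    (hJ : J ≠ ⊤) : (P.filter (fun y => y ∈ J)).card ≤ d := by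
  classical
  by_contra hcon
  push_neg at hcon
  obtain ⟨T, hTsub, hTcard⟩ := Finset.exists_subset_card_eq hcon
  have hTP : T ⊆ P := hTsub.trans (Finset.filter_subset _ _)
  have hTJ : (T : Set (Pt d)) ⊆ (J : Set (Pt d)) := fun y hy =>
    (Finset.mem_filter.1 (hTsub hy)).2
  have hai : AffineIndependent ℝ (fun y : (T : Set (Pt d)) => (y : Pt d)) :=
    hP T hTP (le_of_eq hTcard)
  have hcard : Fintype.card (T : Set (Pt d)) = d + 1 := by
    rw [show Fintype.card (T : Set (Pt d)) = T.card from Fintype.card_coe T, hTcard]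
  have hrank : finrank ℝ (vectorSpan ℝ (Set.range (fun y : (T : Set (Pt d)) => (y : Pt d)))) = d :=
    hai.finrank_vectorSpan hcard
  rw [Subtype.range_coe] at hrank
  have hle : affineSpan ℝ (T : Set (Pt d)) ≤ J := affineSpan_le.2 hTJ
  have hTne : (T : Set (Pt d)).Nonempty := by
    rw [Finset.coe_nonempty, ← Finset.card_pos, hTcard]
    omega
  apply hJ
  apply eq_top_of_dim J (hTne.mono hTJ)
  have h1 : finrank ℝ (vectorSpan ℝ (T : Set (Pt d))) ≤ finrank ℝ J.direction := by
    rw [← direction_affineSpan]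
    exact Submodule.finrank_mono (AffineSubspace.direction_le hle)
  rw [hrank] at h1
  have h2 : finrank ℝ J.direction ≤ d := by
    have := Submodule.finrank_le J.direction
    rwa [finrank_fin_fun] at this
  omega

lemma sgp_empty : StrongGenPos (∅ : Finset (Pt d)) := by
  intro r hr Q hsub hne _
  exfalso
  obtain ⟨y, hy⟩ := hne ⟨0, by omega⟩
  exact Finset.notMem_empty y (hsub _ hy)

open scoped Classical in
lemma greedy {n : ℕ} (P : Finset (Pt d)) (hP : GenPos P)
    (hcard : n + 2 ^ n * 2 ^ 2 ^ n * d ≤ P.card) :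
    ∀ k ≤ n, ∃ S : Finset (Pt d), S ⊆ P ∧ S.card = k ∧ StrongGenPos S := by
  intro k
  induction k with
  | zero => exact fun _ => ⟨∅, Finset.empty_subset P, Finset.card_empty, sgp_empty⟩
  | succ k ih =>
    intro hk
    obtain ⟨S, hSP, hScard, hSgp⟩ := ih (by omega)
    set Cfg := (S.powerset ×ˢ S.powerset.powerset).filter
      (fun c => Jsp c.1 c.2 ≠ ⊤) with hCfg
    set bad := P.filter (fun y => ∃ c ∈ Cfg, y ∈ Jsp c.1 c.2) with hbad
    have hbadcard : bad.card ≤ 2 ^ n * 2 ^ 2 ^ n * d := by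
      have hsub : bad ⊆ Cfg.biUnion (fun c => P.filter (fun y => y ∈ Jsp c.1 c.2)) := by
        intro y hy
        obtain ⟨hyP, c, hc, hyc⟩ := Finset.mem_filter.1 hy
        exact Finset.mem_biUnion.2 ⟨c, hc, Finset.mem_filter.2 ⟨hyP, hyc⟩⟩
      calc bad.card ≤ (Cfg.biUnion (fun c => P.filter (fun y => y ∈ Jsp c.1 c.2))).card :=
            Finset.card_le_card hsub
        _ ≤ ∑ c ∈ Cfg, (P.filter (fun y => y ∈ Jsp c.1 c.2)).card := Finset.card_biUnion_le
        _ ≤ ∑ _c ∈ Cfg, d := Finset.sum_le_sum (fun c hc =>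
            card_filter_le hP (Finset.mem_filter.1 hc).2)
        _ = Cfg.card * d := by rw [Finset.sum_const, smul_eq_mul]
        _ ≤ 2 ^ n * 2 ^ 2 ^ n * d := by
            apply Nat.mul_le_mul_right
            calc Cfg.card ≤ (S.powerset ×ˢ S.powerset.powerset).card :=
                  Finset.card_filter_le _ _
              _ = 2 ^ k * 2 ^ 2 ^ k := by
                  rw [Finset.card_product, Finset.card_powerset, Finset.card_powerset,
                    Finset.card_powerset, hScard]
              _ ≤ 2 ^ n * 2 ^ 2 ^ n :=
                  Nat.mul_le_mul (Nat.pow_le_pow_right (by omega) (by omega))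
                    (Nat.pow_le_pow_right (by omega)
                      (Nat.pow_le_pow_right (by omega) (by omega)))
    have hex : ((P \ S) \ bad).Nonempty := by
      rw [← Finset.card_pos]
      have h1 : (P \ S).card = P.card - k := by rw [Finset.card_sdiff_of_subset hSP, hScard]
      have h2 : (P \ S).card - bad.card ≤ ((P \ S) \ bad).card :=
        Finset.le_card_sdiff bad (P \ S)
      omega
    obtain ⟨x, hx⟩ := hex
    obtain ⟨hxPS, hxbad⟩ := Finset.mem_sdiff.1 hx
    obtain ⟨hxP, hxS⟩ := Finset.mem_sdiff.1 hxPS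
    refine ⟨insert x S, Finset.insert_subset hxP hSP,
      by rw [Finset.card_insert_of_notMem hxS, hScard], ?_⟩
    apply extend S hSgp x
    intro T' hT' F hF
    by_cases hJtop : Jsp T' F = ⊤
    · exact Or.inl hJtop
    · right
      intro hxJ
      apply hxbad
      rw [hbad, Finset.mem_filter]
      exact ⟨hxP, ⟨T', F⟩, Finset.mem_filter.2 ⟨Finset.mem_product.2 ⟨hT', hF⟩, hJtop⟩, hxJ⟩


end Aux

section Aux2
open Module AffineSubspace
theorem statement3 (n d : ℕ) (hn : 1 ≤ n) (hd : 1 ≤ d) :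
    ∃ N : ℕ, 1 ≤ N ∧ ∀ P : Finset (Pt d), P.card = N → GenPos P →
      ∃ S : Finset (Pt d), S ⊆ P ∧ S.card = n ∧ StrongGenPos S := by
  refine ⟨n + 2 ^ n * 2 ^ 2 ^ n * d, by omega, ?_⟩
  intro P hPcard hPgen
  exact greedy P hPgen (le_of_eq hPcard.symm) n le_rfl

end Aux2
end

section
/- For all integers n ≥ 1 and d ≥ 1 there exists a constant C = C(n,d) with the following property: if P ⊆ ℝ^d is a set of n−1 points in strong general position, then every set X ⊆ ℝ^d of C points in general position contains a point p such that P ∪ {p} is in strong general position. -/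
open Finset

open Module
lemma inf_succAbove {L : Type*} [CompleteLattice L] {m : ℕ} (i₀ : Fin (m+1)) (f : Fin (m+1) → L) :
    (⨅ i, f i) = f i₀ ⊓ ⨅ j, f (i₀.succAbove j) := by
  apply le_antisymm
  · exact le_inf (iInf_le _ _) (le_iInf fun j => iInf_le _ _)
  · refine le_iInf fun i => ?_
    rcases eq_or_ne i i₀ with rfl | h
    · exact inf_le_left
    · obtain ⟨j, rfl⟩ := Fin.exists_succAbove_eq h
      exact inf_le_right.trans (iInf_le _ j)

lemma finrank_span_sup {d : ℕ} (U : Submodule ℝ (Pt d)) {w : Pt d} (hw : w ∉ U) :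
    finrank ℝ (Submodule.span ℝ {w} ⊔ U : Submodule ℝ (Pt d)) = finrank ℝ U + 1 := by
  have hw0 : w ≠ 0 := by rintro rfl; exact hw U.zero_mem
  have hinf : Submodule.span ℝ {w} ⊓ U = ⊥ := by
    rw [eq_bot_iff]
    rintro x ⟨hx1, hx2⟩
    obtain ⟨t, rfl⟩ := Submodule.mem_span_singleton.mp hx1
    rcases eq_or_ne t 0 with rfl | ht
    · simp
    · exact absurd ((U.smul_mem_iff ht).mp hx2) hw
  have h := Submodule.finrank_sup_add_finrank_inf_eq (Submodule.span ℝ {w}) U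
  rw [hinf, finrank_span_singleton hw0] at h
  simp only [finrank_bot, add_zero] at h
  omega

lemma subset_proper_card_le {d : ℕ} (X : Finset (Pt d)) (hX : GenPos X)
    (J : AffineSubspace ℝ (Pt d)) (hJ : J ≠ ⊤) (S : Finset (Pt d)) (hSX : S ⊆ X)
    (hSJ' : ∀ x ∈ S, x ∈ J) :
    S.card ≤ d := by
  classical
  by_contra hc
  push_neg at hc
  obtain ⟨T, hTsub, hTcard⟩ := Finset.exists_subset_card_eq hc
  have hTX : T ⊆ X := hTsub.trans hSX
  have hTJ : (T : Set (Pt d)) ⊆ (J : Set (Pt d)) := by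
    intro x hx
    exact hSJ' x (hTsub (by exact_mod_cast hx))
  have hai := hX T hTX (by omega)
  have hcard : Fintype.card ((T : Set (Pt d))) = d + 1 := by
    simpa using hTcard
  have hfr : finrank ℝ (vectorSpan ℝ (Set.range (fun x : (T : Set (Pt d)) => (x : Pt d)))) = d :=
    hai.finrank_vectorSpan hcard
  rw [Subtype.range_coe] at hfr
  have hle : vectorSpan ℝ ((T : Set (Pt d))) ≤ J.direction := by
    rw [← direction_affineSpan]
    exact AffineSubspace.direction_le (affineSpan_le.mpr hTJ)
  have h1 : d ≤ finrank ℝ J.direction := le_trans (le_of_eq hfr.symm) (Submodule.finrank_mono hle)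
  have hdir : J.direction = ⊤ := by
    apply Submodule.eq_top_of_finrank_eq
    have h2 := Submodule.finrank_le J.direction
    simp only [Module.finrank_fin_fun] at h2 ⊢
    omega
  have hne : (J : Set (Pt d)).Nonempty := by
    obtain ⟨x, hx⟩ : T.Nonempty := Finset.card_pos.mp (by omega)
    exact ⟨x, hTJ (by exact_mod_cast hx)⟩
  exact hJ ((AffineSubspace.direction_eq_top_iff_of_nonempty hne).mp hdir)

lemma exists_good_point {d : ℕ} {ι : Type*} [DecidableEq ι] (I : Finset ι)
    (J : ι → AffineSubspace ℝ (Pt d)) (X : Finset (Pt d)) (hX : GenPos X)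
    (hcard : d * I.card + 1 ≤ X.card) :
    ∃ p ∈ X, ∀ i ∈ I, p ∈ J i → J i = ⊤ := by
  classical
  by_contra h
  push_neg at h
  set t : ι → Finset (Pt d) := fun i => {x ∈ X | x ∈ J i ∧ J i ≠ ⊤} with ht
  have hsub : X ⊆ I.biUnion t := by
    intro x hx
    obtain ⟨i, hiI, hmem, hne⟩ := h x hx
    exact Finset.mem_biUnion.mpr ⟨i, hiI, Finset.mem_filter.mpr ⟨hx, hmem, hne⟩⟩
  have hbound : ∀ i, (t i).card ≤ d := by
    intro i
    by_cases hJi : J i = ⊤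
    · have he : t i = ∅ := by
        apply Finset.filter_false_of_mem
        intro x hx
        simp [hJi]
      simp [he]
    · exact subset_proper_card_le X hX (J i) hJi (t i) (Finset.filter_subset _ _)
        (fun x hx => (Finset.mem_filter.mp hx).2.1)
  have hc1 := Finset.card_le_card hsub
  have h2 := Finset.card_biUnion_le (s := I) (t := t)
  have h3 : ∑ i ∈ I, (t i).card ≤ ∑ i ∈ I, d := Finset.sum_le_sum (fun i _ => hbound i)
  rw [Finset.sum_const, smul_eq_mul, mul_comm] at h3
  omega
lemma sgp_aux {d : ℕ} {P : Finset (Pt d)} (hP : StrongGenPos P) {m : ℕ} (hm : 1 ≤ m)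
    (R : Fin m → Finset (Pt d)) (hsub : ∀ j, R j ⊆ P) (hne : ∀ j, (R j).Nonempty)
    (hdisj : ∀ i j, i ≠ j → Disjoint (R i) (R j)) :
    (⨅ j, affineSpan ℝ ((R j : Set (Pt d)))) = ⊥ ∨
      (finrank ℝ (⨅ j, affineSpan ℝ ((R j : Set (Pt d)))).direction : ℤ) =
        (∑ j, (finrank ℝ (affineSpan ℝ ((R j : Set (Pt d)))).direction : ℤ)) -
          (d : ℤ) * ((m : ℤ) - 1) := by
  rcases eq_or_lt_of_le hm with h1 | h2
  · right
    subst h1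
    have hinf : (⨅ j : Fin 1, affineSpan ℝ ((R j : Set (Pt d)))) =
        affineSpan ℝ ((R 0 : Set (Pt d))) := by
      exact iInf_unique _
    rw [hinf, Fin.sum_univ_one]
    push_cast
    ring
  · exact hP m h2 R hsub hne hdisj

noncomputable def badSpan {d : ℕ} (B' : Finset (Pt d)) (𝒬 : Finset (Finset (Pt d))) :
    AffineSubspace ℝ (Pt d) :=
  affineSpan ℝ ((B' : Set (Pt d)) ∪
    ((⨅ S ∈ 𝒬, affineSpan ℝ ((S : Set (Pt d)))) : AffineSubspace ℝ (Pt d)))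

lemma key {d : ℕ} {P : Finset (Pt d)} (hP : StrongGenPos P) {p : Pt d}
    (hgood : ∀ B' ∈ P.powerset, ∀ 𝒬 ∈ P.powerset.powerset,
      p ∈ badSpan B' 𝒬 → badSpan B' 𝒬 = ⊤) :
    StrongGenPos (insert p P) := by
  classical
  by_cases hpP : p ∈ P
  · rwa [Finset.insert_eq_self.mpr hpP]
  intro r hr Q hQsub hQne hQdisj
  by_cases hpQ : ∃ i, p ∈ Q i
  case neg =>
    push_neg at hpQ
    refine hP r hr Q (fun i x hx => ?_) hQne hQdisj
    rcases Finset.mem_insert.mp (hQsub i hx) with rfl | hxP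
    · exact absurd hx (hpQ i)
    · exact hxP
  obtain ⟨i₀, hi₀⟩ := hpQ
  obtain ⟨m, rfl⟩ : ∃ m, r = m + 1 := ⟨r - 1, by omega⟩
  have hm : 1 ≤ m := by omega
  set B' := (Q i₀).erase p with hB'def
  have hB'P : B' ⊆ P := by
    intro x hx
    have hxQ := Finset.mem_of_mem_erase hx
    rcases Finset.mem_insert.mp (hQsub i₀ hxQ) with rfl | hxP
    · exact absurd rfl (Finset.ne_of_mem_erase hx)
    · exact hxP
  have hQi₀ : Q i₀ = insert p B' := (Finset.insert_erase hi₀).symm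
  set R : Fin m → Finset (Pt d) := fun j => Q (i₀.succAbove j) with hRdef
  have hRP : ∀ j, R j ⊆ P := by
    intro j x hx
    rcases Finset.mem_insert.mp (hQsub _ hx) with rfl | hxP
    · exact absurd hx (Finset.disjoint_left.mp
        (hQdisj i₀ (i₀.succAbove j) (Fin.succAbove_ne i₀ j).symm) hi₀)
    · exact hxP
  have hRne : ∀ j, (R j).Nonempty := fun j => hQne _
  have hRdisj : ∀ i j, i ≠ j → Disjoint (R i) (R j) := fun i j hij =>
    hQdisj _ _ (fun hc => hij (Fin.succAbove_right_injective hc))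
  set A := ⨅ j, affineSpan ℝ ((R j : Set (Pt d))) with hAdef
  have hsplit : (⨅ i, affineSpan ℝ ((Q i : Set (Pt d)))) =
      affineSpan ℝ ((Q i₀ : Set (Pt d))) ⊓ A :=
    inf_succAbove i₀ _
  -- identify the bad span
  set 𝒬 := Finset.image R Finset.univ with h𝒬def
  have hAeq : (⨅ S ∈ 𝒬, affineSpan ℝ ((S : Set (Pt d)))) = A := by
    rw [← Finset.inf_eq_iInf, h𝒬def, Finset.inf_image, hAdef]
    rw [Finset.inf_eq_iInf]
    simp
  have hJgood : p ∈ badSpan B' 𝒬 → badSpan B' 𝒬 = ⊤ := by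
    refine hgood B' (Finset.mem_powerset.mpr hB'P) 𝒬 ?_
    rw [Finset.mem_powerset]
    intro S hS
    rw [Finset.mem_powerset]
    obtain ⟨j, _, rfl⟩ := Finset.mem_image.mp hS
    exact hRP j
  have hJeq : badSpan B' 𝒬 = affineSpan ℝ ((B' : Set (Pt d)) ∪ (A : Set (Pt d))) := by
    rw [badSpan, hAeq]
  by_cases hAbot : A = ⊥
  · left; rw [hsplit, hAbot, inf_bot_eq]
  rcases sgp_aux hP hm R hRP hRne hRdisj with h | hAdim
  · exact absurd h hAbot
  rw [← hAdef] at hAdim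
  by_cases hTbot : affineSpan ℝ ((Q i₀ : Set (Pt d))) ⊓ A = ⊥
  · left; rw [hsplit, hTbot]
  obtain ⟨x, hx⟩ := (AffineSubspace.nonempty_iff_ne_bot _).mpr hTbot
  obtain ⟨hx1, hx2⟩ : x ∈ affineSpan ℝ ((Q i₀ : Set (Pt d))) ∧ x ∈ A := hx
  by_cases hB'e : B' = ∅
  · -- Q i₀ = {p}
    have hQs : Q i₀ = {p} := by rw [hQi₀, hB'e]; rfl
    have hxp : x = p := by
      rw [hQs, Finset.coe_singleton] at hx1
      exact (AffineSubspace.mem_affineSpan_singleton _ _).mp hx1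
    have hpA : p ∈ A := hxp ▸ hx2
    have hAtop : A = ⊤ := by
      have h1 : badSpan B' 𝒬 = A := by
        rw [hJeq, hB'e]
        simp [AffineSubspace.affineSpan_coe]
      rw [← h1]
      exact hJgood (h1.symm ▸ hpA)
    right
    rw [hsplit, hQs, hAtop, inf_top_eq]
    have hdir0 : finrank ℝ (affineSpan ℝ (({p} : Finset (Pt d)) : Set (Pt d))).direction = 0 := by
      rw [Finset.coe_singleton, direction_affineSpan, vectorSpan_singleton]
      simp
    have hsum : ∑ i, (finrank ℝ (affineSpan ℝ ((Q i : Set (Pt d)))).direction : ℤ) =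
        (finrank ℝ (affineSpan ℝ ((Q i₀ : Set (Pt d)))).direction : ℤ) +
        ∑ j : Fin m, (finrank ℝ (affineSpan ℝ ((R j : Set (Pt d)))).direction : ℤ) :=
      Fin.sum_univ_succAbove _ i₀
    have hAd : (finrank ℝ (⊤ : AffineSubspace ℝ (Pt d)).direction : ℤ) = d := by
      rw [AffineSubspace.direction_top]
      simp [Module.finrank_fin_fun]
    rw [hAtop, hAd] at hAdim
    rw [hsum, hQs, hdir0]
    push_cast
    have hd : (d : ℤ) * ((m : ℤ) + 1 - 1) = (d : ℤ) * ((m : ℤ) - 1) + d := by ring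
    linarith [hAdim]
  
  obtain ⟨q, hq⟩ := Finset.nonempty_iff_ne_empty.mpr hB'e
  set B := affineSpan ℝ ((B' : Set (Pt d))) with hBdef
  have hqB : q ∈ B := subset_affineSpan ℝ _ (Finset.mem_coe.mpr hq)
  have haffQ : affineSpan ℝ ((Q i₀ : Set (Pt d))) =
      affineSpan ℝ (insert p ((B' : Set (Pt d)))) := by
    rw [hQi₀, Finset.coe_insert]
  -- SGP for the family with B' in place of Q i₀
  set F : Fin (m+1) → Finset (Pt d) := Fin.cons B' R with hFdef
  have hF0 : F 0 = B' := rfl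
  have hFs : ∀ j, F j.succ = R j := fun j => rfl
  have hFsub : ∀ i, F i ⊆ P := by
    intro i
    induction i using Fin.cases with
    | zero => exact hB'P
    | succ j => exact hRP j
  have hFne : ∀ i, (F i).Nonempty := by
    intro i
    induction i using Fin.cases with
    | zero => exact Finset.nonempty_iff_ne_empty.mpr hB'e
    | succ j => exact hRne j
  have hBR : ∀ j, Disjoint B' (R j) := fun j =>
    Finset.disjoint_of_subset_left (Finset.erase_subset _ _)
      (hQdisj i₀ _ (Fin.succAbove_ne i₀ j).symm)
  have hFdisj : ∀ i j, i ≠ j → Disjoint (F i) (F j) := by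
    intro i j hij
    induction i using Fin.cases with
    | zero =>
      induction j using Fin.cases with
      | zero => exact absurd rfl hij
      | succ j' => exact hBR j'
    | succ i' =>
      induction j using Fin.cases with
      | zero => exact (hBR i').symm
      | succ j' => exact hRdisj i' j' (fun hc => hij (by rw [hc]))
  have hFinf : (⨅ i, affineSpan ℝ ((F i : Set (Pt d)))) = B ⊓ A := by
    rw [inf_succAbove (0 : Fin (m+1))]
    congr 1
  have hFsum : (∑ i, (finrank ℝ (affineSpan ℝ ((F i : Set (Pt d)))).direction : ℤ)) =
      (finrank ℝ B.direction : ℤ) +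
        ∑ j : Fin m, (finrank ℝ (affineSpan ℝ ((R j : Set (Pt d)))).direction : ℤ) := by
    rw [Fin.sum_univ_succ]
    rfl
  have hsgpF := hP (m+1) (by omega) F hFsub hFne hFdisj
  rw [hFinf, hFsum] at hsgpF
  by_cases hpB : p ∈ B
  · -- the new point is in the affine span of B', so nothing changes
    have hsame : affineSpan ℝ ((Q i₀ : Set (Pt d))) = B := by
      rw [haffQ]
      refine le_antisymm (affineSpan_le.mpr ?_) (affineSpan_mono ℝ (Set.subset_insert _ _))
      exact Set.insert_subset hpB (subset_affineSpan ℝ _)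
    have hsum : ∑ i, (finrank ℝ (affineSpan ℝ ((Q i : Set (Pt d)))).direction : ℤ) =
        (finrank ℝ (affineSpan ℝ ((Q i₀ : Set (Pt d)))).direction : ℤ) +
        ∑ j : Fin m, (finrank ℝ (affineSpan ℝ ((R j : Set (Pt d)))).direction : ℤ) :=
      Fin.sum_univ_succAbove _ i₀
    rcases hsgpF with hbot | hdim
    · left; rw [hsplit, hsame]; exact hbot
    · right
      rw [hsplit, hsame, hsum, hsame]
      exact hdim
  -- p outside the affine span of B'
  set w := p -ᵥ q with hwdef
  have hwU : w ∉ B.direction := by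
    rw [hwdef, AffineSubspace.vsub_right_mem_direction_iff_mem hqB]
    exact hpB
  have hdirQ : (affineSpan ℝ ((Q i₀ : Set (Pt d)))).direction =
      Submodule.span ℝ {w} ⊔ B.direction := by
    rw [haffQ, ← affineSpan_insert_affineSpan ℝ p ((B' : Set (Pt d)))]
    exact AffineSubspace.direction_affineSpan_insert hqB
  set W := Submodule.span ℝ {w} ⊔ B.direction with hWdef
  have hdimW : finrank ℝ W = finrank ℝ B.direction + 1 := finrank_span_sup _ hwU
  have hqQ : q ∈ affineSpan ℝ ((Q i₀ : Set (Pt d))) := by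
    apply subset_affineSpan
    rw [hQi₀]
    exact Finset.mem_coe.mpr (Finset.mem_insert_of_mem hq)
  have hδW : x -ᵥ q ∈ W := by
    have h1 := AffineSubspace.vsub_mem_direction hx1 hqQ
    rwa [hdirQ] at h1
  have hWV : W ⊔ A.direction = ⊤ := by
    by_cases hBA : B ⊓ A = ⊥
    · -- B and A do not meet: use the bad span
      obtain ⟨y, hy1, z, hz, hyz⟩ := Submodule.mem_sup.mp hδW
      obtain ⟨t, rfl⟩ := Submodule.mem_span_singleton.mp hy1
      have ht0 : t ≠ 0 := by
        rintro rfl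
        rw [zero_smul, zero_add] at hyz
        have hxB : x ∈ B := by
          rw [← AffineSubspace.vsub_right_mem_direction_iff_mem hqB x, ← hyz]
          exact hz
        have hmem : x ∈ B ⊓ A := ⟨hxB, hx2⟩
        rw [hBA] at hmem
        have hmem2 : x ∈ ((⊥ : AffineSubspace ℝ (Pt d)) : Set (Pt d)) := hmem
        rw [AffineSubspace.bot_coe] at hmem2
        exact hmem2
      have hBJ : B ≤ badSpan B' 𝒬 := by
        rw [hJeq, hBdef]
        exact affineSpan_mono ℝ Set.subset_union_left
      have hAJ : A ≤ badSpan B' 𝒬 := by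
        rw [hJeq]
        conv_lhs => rw [← AffineSubspace.affineSpan_coe A]
        exact affineSpan_mono ℝ Set.subset_union_right
      have hδJ : x -ᵥ q ∈ (badSpan B' 𝒬).direction :=
        AffineSubspace.vsub_mem_direction (hAJ hx2) (hBJ hqB)
      have hwJ : w ∈ (badSpan B' 𝒬).direction := by
        have hw2 : w = t⁻¹ • ((x -ᵥ q) - z) := by
          rw [← hyz, add_sub_cancel_right, smul_smul, inv_mul_cancel₀ ht0, one_smul]
        rw [hw2]
        exact Submodule.smul_mem _ _
          (Submodule.sub_mem _ hδJ ((AffineSubspace.direction_le hBJ) hz))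
      have hpJ : p ∈ badSpan B' 𝒬 := by
        have h1 := AffineSubspace.vadd_mem_of_mem_direction hwJ (hBJ hqB)
        rwa [hwdef, vsub_vadd] at h1
      have hJtop : badSpan B' 𝒬 = ⊤ := hJgood hpJ
      have hle : badSpan B' 𝒬 ≤ AffineSubspace.mk' x (W ⊔ A.direction) := by
        rw [hJeq]
        apply affineSpan_le.mpr
        rintro y' (hy' | hy')
        · have h1 : y' -ᵥ q ∈ B.direction :=
            AffineSubspace.vsub_mem_direction (subset_affineSpan ℝ _ hy') hqB
          have h2 : y' -ᵥ x = (y' -ᵥ q) - (x -ᵥ q) := (vsub_sub_vsub_cancel_right _ _ _).symm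
          show y' ∈ AffineSubspace.mk' x (W ⊔ A.direction)
          rw [AffineSubspace.mem_mk', h2]
          exact Submodule.sub_mem _ (Submodule.mem_sup_left (Submodule.mem_sup_right h1))
            (Submodule.mem_sup_left hδW)
        · show y' ∈ AffineSubspace.mk' x (W ⊔ A.direction)
          rw [AffineSubspace.mem_mk']
          exact Submodule.mem_sup_right (AffineSubspace.vsub_mem_direction hy' hx2)
      have h3 := AffineSubspace.direction_le hle
      rw [hJtop, AffineSubspace.direction_top, AffineSubspace.direction_mk'] at h3
      exact top_unique h3
    · -- B and A meet transversally
      rcases hsgpF with hbot | hFdim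
      · exact absurd hbot hBA
      obtain ⟨y, hy⟩ := (AffineSubspace.nonempty_iff_ne_bot _).mpr hBA
      obtain ⟨hy1, hy2⟩ : y ∈ B ∧ y ∈ A := hy
      have hdBA : (B ⊓ A).direction = B.direction ⊓ A.direction :=
        AffineSubspace.direction_inf_of_mem hy1 hy2
      rw [hdBA] at hFdim
      have hsupZ : (finrank ℝ (B.direction ⊔ A.direction : Submodule ℝ (Pt d)) : ℤ) +
          (finrank ℝ (B.direction ⊓ A.direction : Submodule ℝ (Pt d)) : ℤ) =
          (finrank ℝ B.direction : ℤ) + (finrank ℝ A.direction : ℤ) := by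
        exact_mod_cast Submodule.finrank_sup_add_finrank_inf_eq B.direction A.direction
      have hUV : (finrank ℝ (B.direction ⊔ A.direction : Submodule ℝ (Pt d)) : ℤ) = d := by
        have hd : (d:ℤ) * ((m:ℤ) + 1 - 1) = (d:ℤ)*((m:ℤ)-1) + d := by ring
        push_cast at hFdim hAdim
        linarith [hFdim, hAdim, hsupZ, hd]
      have htop2 : B.direction ⊔ A.direction = ⊤ := by
        apply Submodule.eq_top_of_finrank_eq
        have h4 : finrank ℝ (B.direction ⊔ A.direction : Submodule ℝ (Pt d)) = d := by
          exact_mod_cast hUV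
        simp [Module.finrank_fin_fun, h4]
      refine top_unique ?_
      rw [← htop2]
      exact sup_le_sup_right le_sup_right _
  -- conclusion
  right
  rw [hsplit]
  have hTdir : (affineSpan ℝ ((Q i₀ : Set (Pt d))) ⊓ A).direction = W ⊓ A.direction := by
    rw [AffineSubspace.direction_inf_of_mem hx1 hx2, hdirQ]
  have hsupWV := Submodule.finrank_sup_add_finrank_inf_eq W A.direction
  rw [hWV, hdimW] at hsupWV
  have htop : finrank ℝ (⊤ : Submodule ℝ (Pt d)) = d := by simp [Module.finrank_fin_fun]
  rw [htop] at hsupWV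
  have hsum : ∑ i, (finrank ℝ (affineSpan ℝ ((Q i : Set (Pt d)))).direction : ℤ) =
      (finrank ℝ (affineSpan ℝ ((Q i₀ : Set (Pt d)))).direction : ℤ) +
      ∑ j : Fin m, (finrank ℝ (affineSpan ℝ ((R j : Set (Pt d)))).direction : ℤ) :=
    Fin.sum_univ_succAbove _ i₀
  have hdQ : finrank ℝ (affineSpan ℝ ((Q i₀ : Set (Pt d)))).direction =
      finrank ℝ B.direction + 1 := by
    rw [hdirQ]
    exact hdimW
  rw [hsum, hTdir, hdQ]
  have hd : (d:ℤ) * ((m:ℤ) + 1 - 1) = (d:ℤ)*((m:ℤ)-1) + d := by ring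
  have hsupZ2 : (d : ℤ) + (finrank ℝ (W ⊓ A.direction : Submodule ℝ (Pt d)) : ℤ) =
      ((finrank ℝ B.direction : ℤ) + 1) + (finrank ℝ A.direction : ℤ) := by
    exact_mod_cast hsupWV
  push_cast at hAdim ⊢
  linarith [hAdim, hsupZ2, hd]

theorem statement4 (n d : ℕ) (hn : 1 ≤ n) (hd : 1 ≤ d) :
    ∃ C : ℕ, ∀ P : Finset (Pt d), P.card = n - 1 → StrongGenPos P →
      ∀ X : Finset (Pt d), X.card = C → GenPos X →
        ∃ p ∈ X, StrongGenPos (insert p P) := by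
  classical
  refine ⟨d * (2 ^ (n - 1) * 2 ^ 2 ^ (n - 1)) + 1, ?_⟩
  intro P hPcard hP X hXcard hX
  have hIcard : (P.powerset ×ˢ P.powerset.powerset).card = 2 ^ (n - 1) * 2 ^ 2 ^ (n - 1) := by
    rw [Finset.card_product, Finset.card_powerset, Finset.card_powerset, Finset.card_powerset,
      hPcard]
  obtain ⟨p, hpX, hpgood⟩ := exists_good_point (P.powerset ×ˢ P.powerset.powerset)
      (fun ι => badSpan ι.1 ι.2) X hX (by rw [hXcard, hIcard])
  exact ⟨p, hpX, key hP (fun B' hB' 𝒬 h𝒬 =>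
    hpgood (B', 𝒬) (Finset.mem_product.mpr ⟨hB', h𝒬⟩))⟩
end

section
/- Let P ⊆ ℝ^d be a finite set in strong general position, let r ≥ 2, and let P_1,...,P_r be pairwise disjoint nonempty subsets of P with |P_i| ≤ d for every i ∈ [r] and with Σ_{i=1}^r |P_i| ≤ (d+1)(r−1)−1. Then the affine span of the set P_r ∪ (⋂_{i=1}^{r−1} aff(P_i)) has dimension at most d−1. -/
open Finset

open Module
lemma aux_coe_iInf {d : ℕ} {ι : Type*} (S : ι → AffineSubspace ℝ (Pt d)) :
    ((⨅ i, S i : AffineSubspace ℝ (Pt d)) : Set (Pt d)) = ⋂ i, (S i : Set _) := by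
  ext x
  simp only [iInf, sInf, Set.mem_iInter]
  show x ∈ ⋂ s' ∈ Set.range S, (s' : Set _) ↔ _
  simp

lemma aux_finrank_span {d : ℕ} (Q : Finset (Pt d)) (h : Q.Nonempty) :
    finrank ℝ (affineSpan ℝ (Q : Set (Pt d))).direction ≤ Q.card - 1 := by
  classical
  rw [direction_affineSpan]
  have := finrank_vectorSpan_image_finset_le ℝ (id : Pt d → Pt d) Q
    (n := Q.card - 1) (by have := h.card_pos; omega)
  rwa [Finset.image_id] at this

lemma aux_span_singleton {d : ℕ} (v : Pt d) : finrank ℝ (ℝ ∙ v) ≤ 1 := by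
  by_cases hv : v = 0
  · subst hv
    rw [Submodule.span_zero_singleton]
    simp
  · exact le_of_eq (finrank_span_singleton hv)

theorem statement5 (d : ℕ) (hd : 1 ≤ d) (P : Finset (Pt d)) (hP : StrongGenPos P)
    (r : ℕ) (hr : 2 ≤ r) (Q : Fin r → Finset (Pt d))
    (hsub : ∀ i, Q i ⊆ P) (hne : ∀ i, (Q i).Nonempty)
    (hdisj : ∀ i j, i ≠ j → Disjoint (Q i) (Q j))
    (hsize : ∀ i, (Q i).card ≤ d)
    (hsum : ∑ i, (Q i).card ≤ (d + 1) * (r - 1) - 1) :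
    Module.finrank ℝ
        (affineSpan ℝ
          ((Q ⟨r - 1, by omega⟩ : Set (Pt d)) ∪
            ⋂ i : Fin (r - 1),
              (affineSpan ℝ ((Q (Fin.castLE (by omega) i) : Set (Pt d))) : Set (Pt d)))).direction
      ≤ d - 1 := by
  classical
  obtain ⟨k, rfl⟩ : ∃ k, r = k + 1 := ⟨r - 1, by omega⟩
  have hk : 1 ≤ k := by omega
  simp only [Nat.add_sub_cancel] at hsum
  set last : Fin (k + 1) := ⟨k, by omega⟩ with hlast
  set Qk : Fin k → Finset (Pt d) :=
    fun i => Q (Fin.castLE (by omega) i) with hQk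
  set K : AffineSubspace ℝ (Pt d) := ⨅ i, affineSpan ℝ ((Qk i : Set (Pt d))) with hKdef
  have hcoeK : (⋂ i : Fin k,
      (affineSpan ℝ ((Qk i : Set (Pt d))) : Set (Pt d))) = (K : Set (Pt d)) :=
    (aux_coe_iInf _).symm
  show finrank ℝ (affineSpan ℝ ((Q last : Set (Pt d)) ∪
      ⋂ i : Fin k, (affineSpan ℝ ((Qk i : Set (Pt d))) : Set (Pt d)))).direction ≤ d - 1
  rw [hcoeK]
  -- main bound in ℤ
  have key : (finrank ℝ (affineSpan ℝ ((Q last : Set (Pt d)) ∪ (K : Set (Pt d)))).direction : ℤ)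
      ≤ (d : ℤ) - 1 := by
    by_cases hKbot : K = ⊥
    · rw [hKbot, AffineSubspace.bot_coe, Set.union_empty]
      have h1 := aux_finrank_span (Q last) (hne last)
      have h2 := (hne last).card_pos
      have h3 := hsize last
      omega
    -- K nonempty
    have hKne : (K : Set (Pt d)).Nonempty := by
      rcases Set.eq_empty_or_nonempty (K : Set (Pt d)) with h | h
      · exact absurd ((AffineSubspace.coe_eq_bot_iff K).mp h) hKbot
      · exact h
    obtain ⟨q, hq⟩ := hKne
    obtain ⟨p, hp⟩ := hne last
    have hpS : p ∈ affineSpan ℝ ((Q last : Set (Pt d))) :=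
      mem_affineSpan ℝ (Finset.mem_coe.mpr hp)
    -- bound on finrank K
    have hKbound : (finrank ℝ K.direction : ℤ)
        ≤ (∑ i : Fin k, ((Qk i).card : ℤ)) - (k : ℤ) - (d : ℤ) * ((k : ℤ) - 1) := by
      have hci : ∀ i : Fin k, (1 : ℤ) ≤ ((Qk i).card : ℤ) := fun i => by
        exact_mod_cast (hne _).card_pos
      rcases eq_or_lt_of_le hk with hk1 | hk2
      · -- k = 1
        have hk1' : k = 1 := hk1.symm
        subst hk1'
        have hle : K ≤ affineSpan ℝ ((Qk 0 : Set (Pt d))) := iInf_le _ 0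
        have h1 : finrank ℝ K.direction ≤ finrank ℝ (affineSpan ℝ ((Qk 0 : Set (Pt d)))).direction :=
          Submodule.finrank_mono (AffineSubspace.direction_le hle)
        have h2 := aux_finrank_span (Qk 0) (hne _)
        have h4 : (∑ i : Fin 1, ((Qk i).card : ℤ)) = ((Qk 0).card : ℤ) := by
          simp [Fin.sum_univ_one]
        rw [h4]
        have h3' : 1 ≤ (Qk 0).card := (hne _).card_pos
        have h5 : finrank ℝ K.direction ≤ (Qk 0).card - 1 := h1.trans h2
        norm_num
        omega
      · -- k ≥ 2
        have := hP k hk2 Qk (fun i => hsub _) (fun i => hne _)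
          (fun i j hij => hdisj _ _ (by
            simp only [ne_eq, Fin.castLE_inj]
            exact hij))
        rcases this with hbot | hform
        · exact absurd hbot hKbot
        · rw [← hKdef] at hform
          rw [hform]
          have hterm : ∀ i : Fin k,
              (finrank ℝ (affineSpan ℝ ((Qk i : Set (Pt d)))).direction : ℤ)
                ≤ ((Qk i).card : ℤ) - 1 := by
            intro i
            have h2 := aux_finrank_span (Qk i) (hne _)
            have h3' : 1 ≤ (Qk i).card := (hne _).card_pos
            omega
          have hsumle : (∑ i : Fin k,
              (finrank ℝ (affineSpan ℝ ((Qk i : Set (Pt d)))).direction : ℤ))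
                ≤ ∑ i : Fin k, (((Qk i).card : ℤ) - 1) := by
            exact Finset.sum_le_sum fun i _ => hterm i
          have hsub1 : (∑ i : Fin k, (((Qk i).card : ℤ) - 1))
              = (∑ i : Fin k, ((Qk i).card : ℤ)) - (k : ℤ) := by
            rw [Finset.sum_sub_distrib]
            simp
          rw [hsub1] at hsumle
          linarith
    -- sup decomposition
    have hspan : affineSpan ℝ ((Q last : Set (Pt d)) ∪ (K : Set (Pt d)))
        = affineSpan ℝ ((Q last : Set (Pt d))) ⊔ K := by
      rw [AffineSubspace.span_union, AffineSubspace.affineSpan_coe]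
    rw [hspan, AffineSubspace.direction_sup hpS hq]
    have hb1 : finrank ℝ ((affineSpan ℝ ((Q last : Set (Pt d)))).direction ⊔ K.direction
          ⊔ ℝ ∙ (q -ᵥ p) : Submodule ℝ (Pt d))
        ≤ finrank ℝ (affineSpan ℝ ((Q last : Set (Pt d)))).direction + finrank ℝ K.direction + 1 :=
      calc finrank ℝ ((affineSpan ℝ ((Q last : Set (Pt d)))).direction ⊔ K.direction
              ⊔ ℝ ∙ (q -ᵥ p) : Submodule ℝ (Pt d))
          ≤ finrank ℝ ((affineSpan ℝ ((Q last : Set (Pt d)))).direction ⊔ K.direction :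
              Submodule ℝ (Pt d)) + finrank ℝ (ℝ ∙ (q -ᵥ p)) :=
            Submodule.finrank_add_le_finrank_add_finrank _ _
        _ ≤ (finrank ℝ (affineSpan ℝ ((Q last : Set (Pt d)))).direction
              + finrank ℝ K.direction) + 1 :=
            Nat.add_le_add (Submodule.finrank_add_le_finrank_add_finrank _ _)
              (aux_span_singleton _)
    have h1 := aux_finrank_span (Q last) (hne last)
    have h2 := (hne last).card_pos
    -- sum split
    have hsplit : (∑ i : Fin (k+1), ((Q i).card : ℤ))
        = (∑ i : Fin k, ((Qk i).card : ℤ)) + ((Q last).card : ℤ) := by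
      rw [Fin.sum_univ_castSucc]
      rfl
    have hsum' : (∑ i : Fin (k+1), ((Q i).card : ℤ)) ≤ ((d:ℤ) + 1) * (k : ℤ) - 1 := by
      have hc : ((∑ i, (Q i).card : ℕ) : ℤ) ≤ (((d + 1) * k - 1 : ℕ) : ℤ) := by
        exact_mod_cast hsum
      have h2d : 1 ≤ (d+1) * k := Nat.one_le_iff_ne_zero.mpr (by positivity)
      have hc2 : (((d + 1) * k - 1 : ℕ) : ℤ) = ((d:ℤ)+1) * (k:ℤ) - 1 := by
        push_cast [Nat.cast_sub h2d]
        ring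
      calc (∑ i : Fin (k+1), ((Q i).card : ℤ)) = ((∑ i, (Q i).card : ℕ) : ℤ) := by push_cast; rfl
        _ ≤ _ := hc.trans_eq hc2
    have hb1' : (finrank ℝ ((affineSpan ℝ ((Q last : Set (Pt d)))).direction ⊔ K.direction
          ⊔ ℝ ∙ (q -ᵥ p) : Submodule ℝ (Pt d)) : ℤ)
        ≤ (finrank ℝ (affineSpan ℝ ((Q last : Set (Pt d)))).direction : ℤ)
          + (finrank ℝ K.direction : ℤ) + 1 := by exact_mod_cast hb1
    have h1' : (finrank ℝ (affineSpan ℝ ((Q last : Set (Pt d)))).direction : ℤ)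
        ≤ ((Q last).card : ℤ) - 1 := by
      have h2' : 1 ≤ (Q last).card := h2
      omega
    rw [hsplit] at hsum'
    have e2 : (d:ℤ) * ((k:ℤ) - 1) = (d:ℤ)*(k:ℤ) - (d:ℤ) := by ring
    have e1 : ((d:ℤ)+1) * (k:ℤ) = (d:ℤ)*(k:ℤ) + (k:ℤ) := by ring
    rw [e2] at hKbound
    rw [e1] at hsum'
    linarith
  omega
end

section
/- Let d ≥ 1 and let P = (p_1,...,p_m) be a sequence of m distinct points in ℝ^d whose minimal Tverberg partitions are exactly its d-colorful partitions. Then for every simplicial complex Δ on vertex set [n]: there is a partition of the set {p_1,...,p_m} into parts P_1,...,P_n that induce Δ if and only if there is a word W on alphabet [n] of length m such that for every σ ⊆ [n], σ ∈ Δ if and only if W contains a d-colorful subword on alphabet σ. -/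
open Finset

-- ============ auxiliary lemmas ============

lemma filterMap_sublist_map {α β : Type*} (f : α → Option β) (g : α → β) :
    ∀ l : List α, (∀ a ∈ l, ∀ b, f a = some b → b = g a) →
      (l.filterMap f).Sublist (l.map g)
  | [], _ => by simp
  | a :: l, h => by
    rw [List.filterMap_cons, List.map_cons]
    cases hfa : f a with
    | none => exact (filterMap_sublist_map f g l fun x hx => h x (List.mem_cons_of_mem _ hx)).cons _
    | some b =>
      have hb : b = g a := h a List.mem_cons_self b hfa
      subst hb
      exact (filterMap_sublist_map f g l fun x hx => h x (List.mem_cons_of_mem _ hx)).cons₂ _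

lemma filterMap_mem_eq_map {α β : Type*} [DecidableEq α] {is l : List α}
    (h : is.Sublist l) (hn : l.Nodup) (ψ : α → β) :
    (l.filterMap (fun a => if a ∈ is then some (ψ a) else none)) = is.map ψ := by
  induction h with
  | slnil => simp
  | @cons l₁ l₂ a h ih =>
    have ha : a ∉ l₁ := fun hm => (List.nodup_cons.1 hn).1 (h.mem hm)
    simp only [List.filterMap_cons, if_neg ha]
    exact ih (List.nodup_cons.1 hn).2
  | @cons_cons l₁ l₂ a h ih =>
    have hhead : (if a ∈ a :: l₁ then some (ψ a) else none) = some (ψ a) :=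
      if_pos (List.mem_cons_self (a := a) (l := l₁))
    simp only [List.filterMap_cons, hhead, List.map_cons]
    have hrest : List.filterMap (fun x => if x ∈ a :: l₁ then some (ψ x) else none) l₂
        = List.filterMap (fun x => if x ∈ l₁ then some (ψ x) else none) l₂ :=
      List.filterMap_congr (fun x hx => by
        have hxa : x ≠ a := fun e => (List.nodup_cons.1 hn).1 (e ▸ hx)
        simp [List.mem_cons, hxa])
    rw [hrest, ih (List.nodup_cons.1 hn).2]

lemma mem_alphabet_of_colorful {α : Type*} [DecidableEq α] {d : ℕ} {σ : Finset α} {W : List α}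
    (h : IsColorfulWord d σ W) : ∀ a ∈ W, a ∈ σ := by
  obtain ⟨hlen, hcnt⟩ := h
  rcases σ.eq_empty_or_nonempty with rfl | hne
  · intro a ha
    exfalso
    have h0 : W.length = 0 := by simpa using hlen
    rw [List.length_eq_zero_iff.1 h0] at ha
    simp at ha
  intro a ha
  obtain ⟨j, hj, rfl⟩ := List.mem_iff_getElem.1 ha
  have hr : 1 ≤ σ.card := hne.card_pos
  have hlen' : W.length = (d + 1) * (σ.card - 1) + 1 := by omega
  obtain ⟨i, hid, h1, h2⟩ : ∃ i, i ≤ d ∧ i * (σ.card - 1) ≤ j ∧ j < i * (σ.card - 1) + σ.card := by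
    rcases Nat.lt_or_ge σ.card 2 with h2 | h2
    · have hcard1 : σ.card = 1 := by omega
      refine ⟨0, Nat.zero_le d, by simp, ?_⟩
      rw [hlen', hcard1] at hj
      simp only [hcard1]
      omega
    · rcases le_or_gt (j / (σ.card - 1)) d with hq | hq
      · refine ⟨j / (σ.card - 1), hq, Nat.div_mul_le_self j (σ.card - 1), ?_⟩
        calc j = (σ.card - 1) * (j / (σ.card - 1)) + j % (σ.card - 1) :=
              (Nat.div_add_mod j (σ.card - 1)).symm
          _ < (σ.card - 1) * (j / (σ.card - 1)) + σ.card :=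
              Nat.add_lt_add_left (lt_of_lt_of_le (Nat.mod_lt _ (by omega)) (by omega)) _
          _ = j / (σ.card - 1) * (σ.card - 1) + σ.card := by rw [mul_comm]
      · refine ⟨d, le_rfl, ?_, ?_⟩
        · have h3 : (d + 1) * (σ.card - 1) ≤ j :=
            (Nat.le_div_iff_mul_le (by omega)).1 hq
          calc d * (σ.card - 1) ≤ (d + 1) * (σ.card - 1) :=
                Nat.mul_le_mul_right _ (by omega)
            _ ≤ j := h3
        · have h4 : (d + 1) * (σ.card - 1) = d * (σ.card - 1) + (σ.card - 1) := by ring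
          rw [hlen', h4] at hj
          omega
  have htle : i * (σ.card - 1) ≤ d * (σ.card - 1) := Nat.mul_le_mul_right _ hid
  have h4 : (d + 1) * (σ.card - 1) = d * (σ.card - 1) + (σ.card - 1) := by ring
  have hBlen : ((W.drop (i * (σ.card - 1))).take σ.card).length = σ.card := by
    rw [List.length_take, List.length_drop, hlen']
    omega
  have hmemB : W[j] ∈ (W.drop (i * (σ.card - 1))).take σ.card := by
    have hjt : j - i * (σ.card - 1) < ((W.drop (i * (σ.card - 1))).take σ.card).length := by
      rw [hBlen]; omega
    refine List.mem_iff_getElem.2 ⟨j - i * (σ.card - 1), hjt, ?_⟩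
    rw [List.getElem_take, List.getElem_drop]
    have hidx : i * (σ.card - 1) + (j - i * (σ.card - 1)) = j := by omega
    simp only [hidx]
  have hsub : σ.val ≤ (((W.drop (i * (σ.card - 1))).take σ.card : List α) : Multiset α) := by
    rw [Multiset.le_iff_count]
    intro x
    by_cases hx : x ∈ σ
    · rw [Multiset.count_eq_one_of_mem σ.nodup hx, Multiset.coe_count, hcnt i hid x hx]
    · have hx' : x ∉ σ.val := fun hmem => hx (Finset.mem_def.2 hmem)
      rw [Multiset.count_eq_zero.2 hx']
      exact Nat.zero_le _
  have hEqM : σ.val = (((W.drop (i * (σ.card - 1))).take σ.card : List α) : Multiset α) :=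
    Multiset.eq_of_le_of_card_le hsub (by simp [hBlen])
  have hmem : W[j] ∈ σ.val := by rw [hEqM]; exact Multiset.mem_coe.2 hmemB
  exact hmem

lemma colorful_relabel {α β : Type*} [DecidableEq α] [DecidableEq β] {d : ℕ}
    {σ : Finset α} {τ : Finset β} {V : List α} (g : α → β)
    (hcard : τ.card = σ.card)
    (hg' : ∀ a ∈ σ, ∀ b ∈ σ, g a = g b → a = b)
    (hsurj : ∀ b ∈ τ, ∃ a ∈ σ, g a = b)
    (hV : IsColorfulWord d σ V) : IsColorfulWord d τ (V.map g) := by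
  have hmem := mem_alphabet_of_colorful hV
  obtain ⟨hlen, hcnt⟩ := hV
  constructor
  · simp [hcard, hlen]
  · intro i hi b hb
    obtain ⟨a, haσ, rfl⟩ := hsurj b hb
    rw [hcard, ← List.map_drop, ← List.map_take]
    have hBsub : ∀ x ∈ (V.drop (i * (σ.card - 1))).take σ.card, x ∈ σ := fun x hx =>
      hmem x (((List.take_sublist _ _).trans (List.drop_sublist _ _)).mem hx)
    rw [List.count_eq_countP, List.countP_map]
    have hcong : List.countP ((fun x => x == g a) ∘ g) ((V.drop (i * (σ.card - 1))).take σ.card)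
        = List.countP (fun x => x == a) ((V.drop (i * (σ.card - 1))).take σ.card) := by
      apply List.countP_congr
      intro x hx
      simp only [Function.comp, beq_iff_eq]
      exact ⟨fun h => hg' x (hBsub x hx) a haσ h, fun h => h ▸ rfl⟩
    rw [hcong, ← List.count_eq_countP]
    exact hcnt i hi a haσ

lemma exists_minTv {d m r : ℕ} (p : Fin m → Pt d) :
    ∀ N (T : Fin r → Finset (Fin m)), (∑ i, (T i).card) ≤ N → TvPt p T →
      ∃ T', (∀ i, T' i ⊆ T i) ∧ MinTv p T' := by
  intro N
  induction N with
  | zero =>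
    intro T hN hT
    refine ⟨T, fun _ => subset_rfl, hT, ?_⟩
    intro i x hx _
    have h1 : (T i).card ≤ ∑ j, (T j).card :=
      Finset.single_le_sum (f := fun j => (T j).card) (fun _ _ => Nat.zero_le _) (mem_univ i)
    have h2 : 0 < (T i).card := Finset.card_pos.2 ⟨x, hx⟩
    omega
  | succ N ih =>
    intro T hN hT
    by_cases hmin : ∀ i : Fin r, ∀ x ∈ T i, ¬ TvPt p (fun j => (T j).erase x)
    · exact ⟨T, fun _ => subset_rfl, hT, hmin⟩
    · push_neg at hmin
      obtain ⟨i, x, hx, hT'⟩ := hmin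
      have hlt : ∑ j, ((T j).erase x).card < ∑ j, (T j).card :=
        Finset.sum_lt_sum (fun j _ => Finset.card_le_card (Finset.erase_subset _ _))
          ⟨i, mem_univ i, Finset.card_erase_lt_of_mem hx⟩
      obtain ⟨T', hsub, hm⟩ := ih (fun j => (T j).erase x) (by show (∑ j, ((T j).erase x).card) ≤ N; omega) hT'
      exact ⟨T', fun j => (hsub j).trans (Finset.erase_subset _ _), hm⟩

lemma assocWord_eq_filterMap {m r : ℕ} (T : Fin r → Finset (Fin m)) :
    assocWord T = (List.finRange m).filterMap (fun k =>
      if h : ∃ i, k ∈ T i then some h.choose else none) := rfl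

lemma keyA {d m n : ℕ} (p : Fin m → Pt d)
    (hmin : ∀ r : ℕ, 1 ≤ r → ∀ T : Fin r → Finset (Fin m),
      (∀ i j, i ≠ j → Disjoint (T i) (T j)) →
      (MinTv p T ↔ IsColorfulWord d (Finset.univ : Finset (Fin r)) (assocWord T)))
    (w : Fin m → Fin n) (σ : Finset (Fin n)) :
    (⋂ i ∈ σ, convexHull ℝ
        ((Finset.image p (Finset.univ.filter (fun k => w k = i)) : Finset (Pt d)) : Set (Pt d))).Nonempty
      ↔ ContainsColorful d σ ((List.finRange m).map w) := by
  rcases σ.eq_empty_or_nonempty with rfl | hne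
  · constructor
    · intro _
      exact ⟨[], List.nil_sublist _, ⟨by simp, fun i _ a ha => by simp at ha⟩⟩
    · intro _
      simp only [Finset.notMem_empty, Set.iInter_of_empty, Set.iInter_univ]
      exact Set.univ_nonempty
  · have hr : 1 ≤ σ.card := hne.card_pos
    have e : Fin σ.card ≃o {x // x ∈ σ} := σ.orderIsoOfFin rfl
    constructor
    · rintro ⟨x, hx⟩
      have hTv : TvPt p (fun i => Finset.univ.filter (fun k => w k = ((e i : {x // x ∈ σ}) : Fin n))) := by
        refine ⟨x, Set.mem_iInter.2 fun i => ?_⟩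
        have hmem := Set.mem_iInter₂.1 hx ((e i : {x // x ∈ σ}) : Fin n) (e i).2
        rwa [Finset.coe_image] at hmem
      obtain ⟨T, hTsub, hMin⟩ := exists_minTv p _ _ le_rfl hTv
      have hTw : ∀ i, ∀ k ∈ T i, w k = ((e i : {x // x ∈ σ}) : Fin n) := by
        intro i k hk
        have := hTsub i hk
        simp only [Finset.mem_filter] at this
        exact this.2
      have hTdisj : ∀ i j, i ≠ j → Disjoint (T i) (T j) := by
        intro i j hij
        refine Finset.disjoint_left.2 fun k hki hkj => ?_
        have h1 := hTw i k hki
        have h2 := hTw j k hkj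
        exact hij (e.injective (Subtype.ext (h1 ▸ h2)))
      have hcol := (hmin σ.card hr T hTdisj).1 hMin
      refine ⟨(assocWord T).map (fun i => ((e i : {x // x ∈ σ}) : Fin n)), ?_, ?_⟩
      · rw [assocWord_eq_filterMap, List.map_filterMap]
        apply filterMap_sublist_map
        intro k _ b hbk
        by_cases hk : ∃ i, k ∈ T i
        · rw [dif_pos hk, Option.map_some] at hbk
          have hb : b = ((e hk.choose : {x // x ∈ σ}) : Fin n) := (Option.some.inj hbk).symm
          rw [hb, ← hTw hk.choose k hk.choose_spec]
        · rw [dif_neg hk] at hbk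
          simp at hbk
      · refine colorful_relabel _ ?_ ?_ ?_ hcol
        · simp
        · intro a _ b _ hab
          exact e.injective (Subtype.ext hab)
        · intro b hb
          exact ⟨e.symm ⟨b, hb⟩, mem_univ _, by simp⟩
    · rintro ⟨W', hsub, hcol⟩
      have hlet : ∀ a ∈ W', a ∈ σ := mem_alphabet_of_colorful hcol
      obtain ⟨js, hjs, rfl⟩ := List.sublist_map_iff.1 hsub
      classical
      set ψ : Fin m → Fin σ.card :=
        fun k => if h : w k ∈ σ then e.symm ⟨w k, h⟩ else ⟨0, hr⟩ with hψ
      set c : Fin m → Option (Fin σ.card) :=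
        fun k => if k ∈ js then some (ψ k) else none with hc
      set T : Fin σ.card → Finset (Fin m) :=
        fun i => Finset.univ.filter (fun k => c k = some i) with hT
      have hTmem : ∀ i k, k ∈ T i ↔ c k = some i := by
        intro i k; simp [hT]
      have hTdisj : ∀ i j, i ≠ j → Disjoint (T i) (T j) := by
        intro i j hij
        refine Finset.disjoint_left.2 fun k hki hkj => ?_
        rw [hTmem] at hki hkj
        rw [hki] at hkj
        exact hij (Option.some.inj hkj)
      have hassoc : assocWord T = js.map ψ := by
        rw [assocWord_eq_filterMap]
        rw [List.filterMap_congr (g := c) ?_]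
        · rw [hc]
          exact filterMap_mem_eq_map hjs (List.nodup_finRange m) ψ
        · intro k _
          by_cases hk : ∃ i, k ∈ T i
          · rw [dif_pos hk]
            exact ((hTmem hk.choose k).1 hk.choose_spec).symm
          · rw [dif_neg hk]
            by_cases hkj : k ∈ js
            · exact absurd ⟨ψ k, (hTmem (ψ k) k).2 (by rw [hc]; simp [hkj])⟩ hk
            · rw [hc]; simp [hkj]
      have hwjs : ∀ k ∈ js, w k ∈ σ := fun k hk => hlet (w k) (List.mem_map_of_mem (f := w) hk)
      have hTcol : IsColorfulWord d (Finset.univ : Finset (Fin σ.card)) (assocWord T) := by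
        rw [hassoc]
        have hfact : js.map ψ = (js.map w).map
            (fun a => if h : a ∈ σ then e.symm ⟨a, h⟩ else ⟨0, hr⟩) := by
          rw [List.map_map]
          rfl
        rw [hfact]
        refine colorful_relabel _ ?_ ?_ ?_ hcol
        · simp
        · intro a ha b hb hab
          rw [dif_pos ha, dif_pos hb] at hab
          exact congrArg Subtype.val (e.symm.injective hab)
        · intro b _
          refine ⟨((e b : {x // x ∈ σ}) : Fin n), (e b).2, ?_⟩
          rw [dif_pos (e b).2]
          simp
      have hMin := (hmin σ.card hr T hTdisj).2 hTcol
      obtain ⟨x, hx⟩ := hMin.1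
      refine ⟨x, Set.mem_iInter₂.2 fun j hj => ?_⟩
      have hx' := Set.mem_iInter.1 hx (e.symm ⟨j, hj⟩)
      refine convexHull_mono ?_ hx'
      rintro y ⟨k, hk, rfl⟩
      have hck : (if k ∈ js then some (ψ k) else none) = some (e.symm ⟨j, hj⟩) :=
        (hTmem _ k).1 hk
      by_cases hkj : k ∈ js
      · rw [if_pos hkj] at hck
        have hwk : w k ∈ σ := hwjs k hkj
        have hψk : (if h : w k ∈ σ then e.symm ⟨w k, h⟩ else (⟨0, hr⟩ : Fin σ.card))
            = e.symm ⟨j, hj⟩ := Option.some.inj hck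
        rw [dif_pos hwk] at hψk
        have hwkj : w k = j := congrArg Subtype.val (e.symm.injective hψk)
        rw [Finset.coe_image]
        exact ⟨k, by simp [hwkj], rfl⟩
      · rw [if_neg hkj] at hck
        exact absurd hck (by simp)


theorem statement6 (d m n : ℕ) (hd : 1 ≤ d)
    (p : Fin m → Pt d) (hp : Function.Injective p)
    (hmin : ∀ r : ℕ, 1 ≤ r → ∀ T : Fin r → Finset (Fin m),
      (∀ i j, i ≠ j → Disjoint (T i) (T j)) →
      (MinTv p T ↔ IsColorfulWord d (Finset.univ : Finset (Fin r)) (assocWord T)))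
    (Δ : Set (Finset (Fin n))) (hΔ : ∀ σ ∈ Δ, ∀ τ ⊆ σ, τ ∈ Δ) :
    (∃ Q : Fin n → Finset (Pt d),
        (∀ i, Q i ⊆ Finset.image p Finset.univ) ∧
        (∀ x ∈ Finset.image p Finset.univ, ∃ i, x ∈ Q i) ∧
        Induces Δ Q) ↔
      ∃ W : List (Fin n), W.length = m ∧
        ∀ σ : Finset (Fin n), σ ∈ Δ ↔ ContainsColorful d σ W := by
  constructor
  · rintro ⟨Q, hQsub, hQcov, hQdisj, hQiff⟩
    have hf : ∀ k : Fin m, ∃ i, p k ∈ Q i := fun k =>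
      hQcov (p k) (Finset.mem_image_of_mem p (mem_univ k))
    classical
    set f : Fin m → Fin n := fun k => (hf k).choose with hfdef
    have hfk : ∀ k, p k ∈ Q (f k) := fun k => (hf k).choose_spec
    have hclass : ∀ j, Q j = Finset.image p (Finset.univ.filter (fun k => f k = j)) := by
      intro j
      ext x
      simp only [Finset.mem_image, Finset.mem_filter, Finset.mem_univ, true_and]
      constructor
      · intro hx
        obtain ⟨k, _, rfl⟩ := Finset.mem_image.1 (hQsub j hx)
        refine ⟨k, ?_, rfl⟩
        by_contra hne2
        exact Finset.disjoint_left.1 (hQdisj _ _ hne2) (hfk k) hx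
      · rintro ⟨k, rfl, rfl⟩
        exact hfk k
    refine ⟨(List.finRange m).map f, by simp, fun σ => ?_⟩
    rw [← hQiff σ]
    have hset : (⋂ i ∈ σ, convexHull ℝ ((Q i : Set (Pt d)))) =
        ⋂ i ∈ σ, convexHull ℝ
          ((Finset.image p (Finset.univ.filter (fun k => f k = i)) : Finset (Pt d)) : Set (Pt d)) := by
      apply Set.iInter₂_congr
      intro i _
      rw [hclass i]
    rw [hset]
    exact keyA p hmin f σ
  · rintro ⟨W, hlen, hW⟩
    have hwlt : ∀ k : Fin m, (k : ℕ) < W.length := fun k => by rw [hlen]; exact k.isLt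
    set w : Fin m → Fin n := fun k => W.get ⟨k, hwlt k⟩ with hwdef
    have hWeq : W = (List.finRange m).map w := by
      apply List.ext_getElem (by simp [hlen])
      intro j h1 h2
      simp [hwdef]
    refine ⟨fun i => Finset.image p (Finset.univ.filter (fun k => w k = i)), ?_, ?_, ?_, ?_⟩
    · intro i
      exact Finset.image_subset_image (Finset.filter_subset _ _)
    · intro x hx
      obtain ⟨k, _, rfl⟩ := Finset.mem_image.1 hx
      exact ⟨w k, Finset.mem_image_of_mem p (Finset.mem_filter.2 ⟨mem_univ k, rfl⟩)⟩
    · intro i j hij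
      refine Finset.disjoint_left.2 fun x hxi hxj => ?_
      obtain ⟨k, hk, rfl⟩ := Finset.mem_image.1 hxi
      obtain ⟨k', hk', hkk⟩ := Finset.mem_image.1 hxj
      obtain rfl := hp hkk
      rw [Finset.mem_filter] at hk hk'
      exact hij (hk.2.symm.trans hk'.2)
    · intro σ
      rw [hW σ, hWeq]
      exact keyA p hmin w σ
end

section
/- Let d ≥ 1 and let σ be a finite alphabet with |σ| ≥ 2. If W is a d-colorful word on alphabet σ, then for every nonempty subset τ ⊆ σ, W contains a d-colorful subword on alphabet τ. -/
open Finset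

section Aux
variable {α : Type*} [DecidableEq α]

/-- From a list containing every element of `s`, extract a sublist containing each
element of `s` exactly once and nothing else. -/
lemma aux_pick (l : List α) (s : Finset α) (h : ∀ a ∈ s, a ∈ l) :
    ∃ F : List α, F.Sublist l ∧ F.length = s.card ∧
      ∀ a, F.count a = if a ∈ s then 1 else 0 := by
  classical
  set F := l.dedup.filter (fun a => a ∈ s) with hF
  have hnd : F.Nodup := (l.nodup_dedup).filter _
  have hmem : ∀ a, a ∈ F ↔ a ∈ s := by
    intro a
    simp only [hF, List.mem_filter, List.mem_dedup, decide_eq_true_eq]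
    exact ⟨fun h' => h'.2, fun h' => ⟨h a h', h'⟩⟩
  refine ⟨F, (List.filter_sublist).trans l.dedup_sublist, ?_, ?_⟩
  · have : F.toFinset = s := by ext a; simp [List.mem_toFinset, hmem]
    rw [← List.toFinset_card_of_nodup hnd, this]
  · intro a
    by_cases ha : a ∈ s
    · rw [if_pos ha]; exact List.count_eq_one_of_mem hnd ((hmem a).2 ha)
    · rw [if_neg ha]; exact List.count_eq_zero_of_not_mem (fun hc => ha ((hmem a).1 hc))

/-- Splitting a sublist relation at the last element. -/
lemma snoc_sublist_split {V₀ : List α} {b : α} {W : List α}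
    (h : (V₀ ++ [b]).Sublist W) :
    ∃ W₁ W₂, W = W₁ ++ b :: W₂ ∧ V₀.Sublist W₁ := by
  rw [List.append_sublist_iff] at h
  obtain ⟨r₁, r₂, rfl, h1, h2⟩ := h
  rw [List.singleton_sublist] at h2
  obtain ⟨s, t, rfl⟩ := List.append_of_mem h2
  exact ⟨r₁ ++ s, t, by simp, h1.trans (List.sublist_append_left _ _)⟩

lemma key_lemma (σ τ : Finset α) (hτσ : τ ⊆ σ) (hτ : τ.Nonempty) :
    ∀ k (W : List α), IsColorfulWord k σ W → ∃ V, V.Sublist W ∧ IsColorfulWord k τ V := by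
  have hσne : σ.Nonempty := hτ.mono hτσ
  have hr : 1 ≤ σ.card := Finset.card_pos.2 hσne
  have ht : 1 ≤ τ.card := Finset.card_pos.2 hτ
  intro k
  induction k with
  | zero =>
    intro W hW
    obtain ⟨hlen, hwin⟩ := hW
    have hlW : W.length = σ.card := by omega
    have hwin0 := hwin 0 le_rfl
    simp only [Nat.zero_mul, List.drop_zero] at hwin0
    rw [List.take_of_length_le hlW.le] at hwin0
    have hmem : ∀ a ∈ τ, a ∈ W := by
      intro a ha
      have := hwin0 a (hτσ ha)
      rw [← List.count_pos_iff]; omega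
    obtain ⟨F, hF1, hF2, hF3⟩ := aux_pick W τ hmem
    refine ⟨F, hF1, ?_, ?_⟩
    · rw [hF2]; omega
    · intro i hi a ha
      have hi0 : i = 0 := Nat.le_zero.1 hi
      subst hi0
      simp only [Nat.zero_mul, List.drop_zero]
      rw [List.take_of_length_le (le_of_eq hF2), hF3, if_pos ha]
  | succ k ih =>
    intro W hW
    obtain ⟨hlen, hwin⟩ := hW
    have eσ : (k + 1 + 1) * (σ.card - 1) = (k + 1) * (σ.card - 1) + (σ.card - 1) := by ring
    have eτ : (k + 1 + 1) * (τ.card - 1) = (k + 1) * (τ.card - 1) + (τ.card - 1) := by ring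
    have eτ2 : (k + 1) * (τ.card - 1) = k * (τ.card - 1) + (τ.card - 1) := by ring
    set n := (k + 1) * (σ.card - 1) with hn
    have hlW : W.length = n + σ.card := by omega
    set W' := W.take (n + 1) with hW'def
    set E := W.drop (n + 1) with hEdef
    have hlenW' : W'.length = n + 1 := by rw [hW'def, List.length_take]; omega
    have hWsplit : W' ++ E = W := List.take_append_drop _ _
    have hlenE : E.length = σ.card - 1 := by rw [hEdef, List.length_drop]; omega
    -- W' is k-colorful on σ
    have hW'col : IsColorfulWord k σ W' := by
      constructor
      · omega
      · intro i hi a ha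
        have hmul : i * (σ.card - 1) ≤ k * (σ.card - 1) := Nat.mul_le_mul_right _ hi
        have hkn : k * (σ.card - 1) + (σ.card - 1) = n := by rw [hn]; ring
        have heq : (W'.drop (i * (σ.card - 1))).take σ.card
            = (W.drop (i * (σ.card - 1))).take σ.card := by
          rw [hW'def, List.drop_take, List.take_take]
          congr 1
          omega
        rw [heq]
        exact hwin i (le_trans hi (Nat.le_succ k)) a ha
    obtain ⟨V, hVW', hVcol⟩ := ih W' hW'col
    obtain ⟨hlenV, hVwin⟩ := hVcol
    have hVlen : V.length = (k + 1) * (τ.card - 1) + 1 := by omega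
    have hVne : V ≠ [] := by
      intro h; rw [h] at hVlen; simp at hVlen
    set b := V.getLast hVne with hb
    have hVsnoc : V.dropLast ++ [b] = V := List.dropLast_append_getLast hVne
    have hdropb : V.drop (V.length - 1) = [b] := by
      have h0 : List.drop V.dropLast.length (V.dropLast ++ [b]) = [b] := List.drop_left
      rw [hVsnoc] at h0
      rwa [List.length_dropLast] at h0
    -- b ∈ τ
    have hbτ : b ∈ τ := by
      set w := V.drop (k * (τ.card - 1)) with hwdef
      have hlw : w.length = τ.card := by rw [hwdef, List.length_drop]; omega
      have hwne : w ≠ [] := by intro h; rw [h] at hlw; simp at hlw; omega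
      have hcnt : ∀ a ∈ τ, w.count a = 1 := by
        intro a ha
        have := hVwin k le_rfl a ha
        rwa [List.take_of_length_le hlw.le] at this
      have hle : τ.val ≤ (w : Multiset α) := by
        rw [Multiset.le_iff_count]
        intro a
        by_cases ha : a ∈ τ
        · have : Multiset.count a τ.val = 1 := Multiset.count_eq_one_of_mem τ.nodup ha
          rw [this, Multiset.coe_count, hcnt a ha]
        · have : Multiset.count a τ.val = 0 := Multiset.count_eq_zero_of_notMem ha
          rw [this]; exact Nat.zero_le _
      have heqm : τ.val = (w : Multiset α) :=
        Multiset.eq_of_le_of_card_le hle (by simpa [hlw] using le_refl τ.card)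
      have hbw : b ∈ w := by
        have h1 : w.drop (V.length - 1 - k * (τ.card - 1)) = [b] := by
          rw [hwdef, List.drop_drop, ← hdropb]
          congr 1
          omega
        have h2 : b ∈ w.drop (V.length - 1 - k * (τ.card - 1)) := by rw [h1]; simp
        exact List.mem_of_mem_drop h2
      have hbm : b ∈ (w : Multiset α) := by exact_mod_cast hbw
      rw [← heqm] at hbm
      exact hbm
    -- counts in the last window of W
    have hlenL : (W.drop n).length = σ.card := by rw [List.length_drop]; omega
    have hL : ∀ a ∈ σ, (W.drop n).count a = 1 := by
      intro a ha
      have := hwin (k + 1) le_rfl a ha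
      rwa [List.take_of_length_le hlenL.le] at this
    -- split W' at b
    obtain ⟨W₁, W₂, hsplit, hV₀⟩ := snoc_sublist_split (W := W')
      (by rw [hVsnoc]; exact hVW')
    have hlen12 : W₁.length + W₂.length + 1 = n + 1 := by
      have := congrArg List.length hsplit
      simp only [List.length_append, List.length_cons] at this
      omega
    -- every element of τ.erase b occurs after the matched position of b
    have hmemM : ∀ a ∈ τ.erase b, a ∈ W₂ ++ E := by
      intro a ha
      obtain ⟨hab, haτ⟩ := Finset.mem_erase.1 ha
      have hcnt := hL a (hτσ haτ)
      rcases eq_or_ne W₂ [] with h2 | h2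
      · have hW1 : W₁.length = n := by rw [h2] at hlen12; simpa using hlen12
        have hdn : W.drop n = b :: E := by
          rw [← hWsplit, hsplit, h2]
          have : (W₁ ++ [b]) ++ E = W₁ ++ b :: E := by simp
          rw [show W₁ ++ b :: ([] : List α) = W₁ ++ [b] by simp, this, ← hW1,
            List.drop_left]
        rw [hdn, List.count_cons] at hcnt
        rw [List.mem_append]
        right
        rw [← List.count_pos_iff]
        rw [if_neg (by simpa using Ne.symm hab)] at hcnt
        omega
      · have hW2pos : 1 ≤ W₂.length := List.length_pos_iff.2 h2
        have hdn : W.drop n = (W₂ ++ E).drop (W₂.length - 1) := by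
          rw [← hWsplit, hsplit]
          have h3 : (W₁ ++ b :: W₂) ++ E = W₁ ++ b :: (W₂ ++ E) := by simp
          rw [h3, show n = W₁.length + (W₂.length - 1 + 1) by omega,
            List.drop_append, List.drop_eq_nil_of_le (by omega), List.nil_append,
            Nat.add_sub_cancel_left, List.drop_succ_cons]
        have hmem' : a ∈ W.drop n := by rw [← List.count_pos_iff]; omega
        rw [hdn] at hmem'
        exact List.mem_of_mem_drop hmem'
    obtain ⟨M, hM1, hM2, hM3⟩ := aux_pick (W₂ ++ E) (τ.erase b) hmemM
    have hlenM : M.length = τ.card - 1 := by rw [hM2, Finset.card_erase_of_mem hbτ]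
    refine ⟨V ++ M, ?_, ?_, ?_⟩
    · -- sublist
      have hsub : (V.dropLast ++ ([b] ++ M)).Sublist (W₁ ++ ([b] ++ (W₂ ++ E))) :=
        hV₀.append ((List.Sublist.refl [b]).append hM1)
      have hw : W₁ ++ ([b] ++ (W₂ ++ E)) = W := by
        rw [← hWsplit, hsplit]; simp
      have hv : V.dropLast ++ ([b] ++ M) = V ++ M := by
        rw [← List.append_assoc, hVsnoc]
      rwa [hw, hv] at hsub
    · -- length
      rw [List.length_append, hVlen, hlenM]
      omega
    · -- windows
      intro i hi a ha
      rcases Nat.lt_or_ge i (k + 1) with hik | hik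
      · have hik' : i ≤ k := by omega
        have hmul : i * (τ.card - 1) ≤ k * (τ.card - 1) := Nat.mul_le_mul_right _ hik'
        have e1 : (V ++ M).drop (i * (τ.card - 1))
            = V.drop (i * (τ.card - 1)) ++ M :=
          List.drop_append_of_le_length (by omega)
        have e2 : (V.drop (i * (τ.card - 1)) ++ M).take τ.card
            = (V.drop (i * (τ.card - 1))).take τ.card :=
          List.take_append_of_le_length (by rw [List.length_drop]; omega)
        rw [e1, e2]
        exact hVwin i hik' a ha
      · have hieq : i = k + 1 := by omega
        subst hieq
        have e1 : (V ++ M).drop ((k + 1) * (τ.card - 1)) = [b] ++ M := by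
          rw [show (k + 1) * (τ.card - 1) = V.length - 1 by omega,
            List.drop_append_of_le_length (by omega), hdropb]
        have e2 : ([b] ++ M).length ≤ τ.card := by
          simp only [List.length_append, List.length_singleton, hlenM]
          omega
        rw [e1, List.take_of_length_le e2, List.count_append]
        rcases eq_or_ne a b with rfl | hab
        · simp [hM3 b]
        · have hz : List.count a [b] = 0 :=
            List.count_eq_zero_of_not_mem (by simp [hab])
          simp [hM3 a, Finset.mem_erase.2 ⟨hab, ha⟩, hz]

end Aux

theorem statement8 {α : Type*} [DecidableEq α] (d : ℕ) (hd : 1 ≤ d)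
    (σ : Finset α) (hσ : 2 ≤ σ.card) (W : List α) (hW : IsColorfulWord d σ W) :
    ∀ τ ⊆ σ, τ.Nonempty → ContainsColorful d τ W := by
  intro τ hτσ hne
  obtain ⟨V, h1, h2⟩ := key_lemma σ τ hτσ hne d W hW
  exact ⟨V, h1, h2⟩
end

section
/- For every word W on alphabet [n] and every d ≥ 1, the family Δ^d(W) = {σ ⊆ [n] : W contains a d-colorful subword on alphabet σ} is closed under taking subsets; that is, Δ^d(W) is a simplicial complex on [n]. -/
open Finset

section Aux
variable {α : Type*} [DecidableEq α]

/-- Window of a prefix: taking a window entirely inside `A` ignores `B`. -/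
lemma window_prefix (A B : List α) (j m : ℕ) (h : j + m ≤ A.length) :
    ((A ++ B).drop j).take m = (A.drop j).take m := by
  rw [List.drop_append_of_le_length (by omega),
    List.take_append_of_le_length (by simp; omega)]

/-- From a list containing every element of a nonempty finset `s`, one can select a
subword consisting of each element of `s` exactly once, with an identified last letter. -/
lemma pick_perm : ∀ (M : List α) (s : Finset α), s.Nonempty → (∀ a ∈ s, 1 ≤ M.count a) →
    ∃ (M₁ M₂ Q : List α) (x : α), M = M₁ ++ x :: M₂ ∧ x ∈ s ∧ Q.Sublist M₁ ∧
      (∀ a, Q.count a = if a ∈ s.erase x then 1 else 0) ∧ Q.length = s.card - 1 := by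
  intro M
  induction M with
  | nil =>
    rintro s ⟨a, ha⟩ h
    simpa using h a ha
  | cons m M ih =>
    intro s hs h
    by_cases hall : ∀ a ∈ s, 1 ≤ M.count a
    · obtain ⟨M₁, M₂, Q, x, hM, hx, hQ, hcnt, hlen⟩ := ih s hs hall
      exact ⟨m :: M₁, M₂, Q, x, by rw [hM]; rfl, hx, hQ.cons m, hcnt, hlen⟩
    · push_neg at hall
      obtain ⟨b, hb, hbc⟩ := hall
      have hbm : b = m := by
        by_contra hne
        have h1 := h b hb
        simp only [List.count_cons, beq_iff_eq] at h1
        rw [if_neg (Ne.symm hne)] at h1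
        omega
      have hms : m ∈ s := hbm ▸ hb
      have hmc : M.count m < 1 := hbm ▸ hbc
      by_cases hsb : (s.erase m).Nonempty
      · have h' : ∀ a ∈ s.erase m, 1 ≤ M.count a := by
          intro a ha
          have h1 := h a (mem_of_mem_erase ha)
          have h2 : a ≠ m := ne_of_mem_erase ha
          simpa [List.count_cons, h2, Ne.symm h2] using h1
        obtain ⟨M₁, M₂, Q, x, hM, hx, hQ, hcnt, hlen⟩ := ih (s.erase m) hsb h'
        have hxm : x ≠ m := ne_of_mem_erase hx
        have hmsx : m ∈ s.erase x := Finset.mem_erase.mpr ⟨fun h => hxm h.symm, hms⟩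
        refine ⟨m :: M₁, M₂, m :: Q, x, by rw [hM]; rfl, mem_of_mem_erase hx,
          hQ.cons₂ m, ?_, ?_⟩
        · intro a
          have hcomm : (s.erase m).erase x = (s.erase x).erase m := Finset.erase_right_comm
          by_cases ham : a = m
          · subst ham
            have : a ∉ (s.erase x).erase a := fun hcon => (Finset.mem_erase.mp hcon).1 rfl
            simp [List.count_cons, hcnt a, hcomm, this, hmsx]
          · have : (a ∈ (s.erase x).erase m) = (a ∈ s.erase x) := by
              simp [Finset.mem_erase, ham]
            simp [List.count_cons, hcnt a, hcomm, ham, Ne.symm ham, this]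
        · have h2 : 2 ≤ s.card := by
            have := Finset.card_pos.mpr hsb
            rw [Finset.card_erase_of_mem hms] at this
            omega
          rw [List.length_cons, hlen, Finset.card_erase_of_mem hms]
          omega
      · rw [Finset.not_nonempty_iff_eq_empty] at hsb
        have hseq : s = {m} := by
          apply Finset.eq_singleton_iff_unique_mem.mpr
          refine ⟨hms, fun y hy => ?_⟩
          by_contra hne
          have : y ∈ s.erase m := Finset.mem_erase.mpr ⟨hne, hy⟩
          simp [hsb] at this
        refine ⟨[], M, [], m, rfl, hms, List.nil_sublist _, ?_, by simp [hseq]⟩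
        intro a
        simp [hseq]

/-- Extending a `d`-colorful word on `τ` by one more block. -/
lemma extend_colorful (τ : Finset α) (ht : 2 ≤ τ.card) (d : ℕ) (S Q : List α) (x y : α)
    (hx : x ∈ τ) (hy : y ∈ τ.erase x)
    (hcol : IsColorfulWord d τ (S ++ [x]))
    (hcnt : ∀ a, Q.count a = if a ∈ (τ.erase x).erase y then 1 else 0)
    (hQl : Q.length = (τ.erase x).card - 1) :
    IsColorfulWord (d + 1) τ ((S ++ [x]) ++ (Q ++ [y])) := by
  obtain ⟨hlen, hwin⟩ := hcol
  have hmin : min τ.card 1 = 1 := by omega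
  rw [hmin] at hlen
  have hQlen : Q.length = τ.card - 2 := by
    rw [hQl, Finset.card_erase_of_mem hx]
    omega
  have hexp : (d + 1 + 1) * (τ.card - 1) = (d + 1) * (τ.card - 1) + (τ.card - 1) := by ring
  constructor
  · rw [List.length_append, hlen, List.length_append, hQlen, List.length_singleton, hmin, hexp]
    omega
  · intro i hi a ha
    rcases Nat.lt_or_ge i (d + 1) with hlt | hge
    · have hile : i ≤ d := by omega
      rw [window_prefix _ _ _ _ (by
        rw [hlen]
        have h1 : i * (τ.card - 1) ≤ d * (τ.card - 1) := Nat.mul_le_mul_right _ hile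
        have h2 : (d + 1) * (τ.card - 1) = d * (τ.card - 1) + (τ.card - 1) := by ring
        omega)]
      exact hwin i hile a ha
    · have hieq : i = d + 1 := by omega
      subst hieq
      have hdrop : ((S ++ [x]) ++ (Q ++ [y])).drop ((d + 1) * (τ.card - 1))
          = x :: (Q ++ [y]) := by
        have hS : S.length = (d + 1) * (τ.card - 1) := by
          rw [List.length_append, List.length_singleton] at hlen
          omega
        rw [List.append_assoc, ← hS]
        have h0 := List.drop_length_add_append (l₁ := S) (l₂ := [x] ++ (Q ++ [y])) 0
        simpa using h0
      rw [hdrop]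
      have hlen2 : (x :: (Q ++ [y])).length = τ.card := by
        simp [hQlen]; omega
      rw [List.take_of_length_le (by omega)]
      have hyx : y ≠ x := ne_of_mem_erase hy
      have hyτ : y ∈ τ := mem_of_mem_erase hy
      by_cases hax : a = x
      · subst hax
        have h1 : a ∉ (τ.erase a).erase y := fun hcon =>
          (Finset.mem_erase.mp (mem_of_mem_erase hcon)).1 rfl
        simp [List.count_cons, List.count_append, hcnt a, h1, Ne.symm hyx, hyx]
      · by_cases hay : a = y
        · subst hay
          have h1 : a ∉ (τ.erase x).erase a := fun hcon => (Finset.mem_erase.mp hcon).1 rfl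
          simp [List.count_cons, List.count_append, hcnt a, h1, Ne.symm hax]
        · have h1 : a ∈ (τ.erase x).erase y := by
            rw [Finset.mem_erase, Finset.mem_erase]
            exact ⟨hay, hax, ha⟩
          simp [List.count_cons, List.count_append, hcnt a, h1, Ne.symm hax, Ne.symm hay]

end Aux

section Main
variable {α : Type*} [DecidableEq α]

/-- Main lemma: inside a `d`-colorful word on `σ` one can find a `d`-colorful subword
on any subset `τ` with at least two elements, with last letter at an identified position. -/
lemma main_colorful (σ τ : Finset α) (hsub : τ ⊆ σ) (ht : 2 ≤ τ.card) :
    ∀ (d : ℕ) (W : List α), W.length = (d + 1) * (σ.card - 1) + 1 →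
    (∀ i ≤ d, ∀ a ∈ σ, ((W.drop (i * (σ.card - 1))).take σ.card).count a = 1) →
    ∃ (S U₁ U₂ : List α) (x : α), W = U₁ ++ x :: U₂ ∧ S.Sublist U₁ ∧ x ∈ τ ∧
      IsColorfulWord d τ (S ++ [x]) := by
  have hr : 2 ≤ σ.card := le_trans ht (Finset.card_le_card hsub)
  set r := σ.card with hrdef
  set t := τ.card with htdef
  intro d
  induction d with
  | zero =>
    intro W hlen hwin
    have hlen' : W.length = r := by omega
    have hW : ∀ a ∈ τ, 1 ≤ W.count a := by
      intro a ha
      have := hwin 0 (le_refl 0) a (hsub ha)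
      simp only [Nat.zero_mul, List.drop_zero] at this
      rw [List.take_of_length_le (by omega)] at this
      omega
    obtain ⟨M₁, M₂, Q, x, hM, hx, hQ, hcnt, hQl⟩ :=
      pick_perm W τ (Finset.card_pos.mp (by omega)) hW
    refine ⟨Q, M₁, M₂, x, hM, hQ, hx, ?_, ?_⟩
    · rw [List.length_append, List.length_singleton, hQl]
      omega
    · intro i hi a ha
      interval_cases i
      simp only [Nat.zero_mul, List.drop_zero]
      rw [List.take_of_length_le (by
        rw [List.length_append, List.length_singleton, hQl]; omega)]
      rw [List.count_append, hcnt a, List.count_singleton']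
      by_cases hax : a = x
      · subst hax; simp
      · simp [Finset.mem_erase, hax, ha, fun h : a = x => hax h]
        intro h; exact absurd h.symm hax
  | succ d ih =>
    intro W hlen hwin
    set k := (d + 1) * (r - 1) + 1 with hkdef
    have hexp : (d + 1 + 1) * (r - 1) = (d + 1) * (r - 1) + (r - 1) := by ring
    have hkle : k ≤ W.length := by omega
    set W' := W.take k with hW'def
    set E := W.drop k with hEdef
    have hWeq : W = W' ++ E := (List.take_append_drop k W).symm
    have hW'len : W'.length = k := by
      rw [hW'def, List.length_take]; omega
    have hElen : E.length = r - 1 := by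
      rw [hEdef, List.length_drop]; omega
    have hwin' : ∀ i ≤ d, ∀ a ∈ σ, ((W'.drop (i * (r - 1))).take r).count a = 1 := by
      intro i hi a ha
      have hle : i * (r - 1) + r ≤ W'.length := by
        rw [hW'len, hkdef]
        have h2 : (d + 1) * (r - 1) = d * (r - 1) + (r - 1) := by ring
        have h3 : i * (r - 1) ≤ d * (r - 1) := Nat.mul_le_mul_right _ hi
        omega
      rw [← window_prefix W' E _ _ hle, ← hWeq]
      exact hwin i (by omega) a ha
    obtain ⟨S, U₁, U₂, x, hU, hS, hxτ, hcol⟩ := ih W' hW'len hwin'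
    have hU₁len : U₁.length + 1 + U₂.length = k := by
      have := hW'len
      rw [hU] at this
      simp at this
      omega
    -- the last window of W
    have hwinlast := hwin (d + 1) (le_refl _)
    have hxσ := hsub hxτ
    rcases List.eq_nil_or_concat U₂ with hU₂ | ⟨U₂', u, hU₂⟩
    · -- x is the last letter of W'
      subst hU₂
      have hWx : W = U₁ ++ x :: E := by
        rw [hWeq, hU]; simp
      have hdropW : W.drop ((d + 1) * (r - 1)) = x :: E := by
        have hU₁ : U₁.length = (d + 1) * (r - 1) := by
          rw [hkdef] at hU₁len
          simp only [List.length_nil] at hU₁len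
          omega
        rw [hWx, ← hU₁]
        have := List.drop_length_add_append (l₁ := U₁) (l₂ := x :: E) 0
        simpa using this
      have hcntE : ∀ a ∈ τ.erase x, 1 ≤ E.count a := by
        intro a ha
        have h1 := hwinlast a (hsub (mem_of_mem_erase ha))
        rw [hdropW] at h1
        rw [List.take_of_length_le (by simp [hElen]; omega)] at h1
        have hax : a ≠ x := ne_of_mem_erase ha
        simp only [List.count_cons, beq_iff_eq] at h1
        rw [if_neg (Ne.symm hax)] at h1
        omega
      have hne : (τ.erase x).Nonempty := by
        apply Finset.card_pos.mp
        rw [Finset.card_erase_of_mem hxτ]; omega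
      obtain ⟨M₁, M₂, Q, y, hM, hy, hQ, hcnt, hQl⟩ := pick_perm E (τ.erase x) hne hcntE
      refine ⟨(S ++ [x]) ++ Q, U₁ ++ x :: M₁, M₂, y, ?_, ?_, mem_of_mem_erase hy, ?_⟩
      · rw [hWx, hM]; simp
      · have : (S ++ [x]) ++ Q = S ++ (x :: Q) := by simp
        rw [this]
        exact hS.append ((hQ.cons₂ x).trans (List.Sublist.refl _))
      · rw [List.append_assoc]
        exact extend_colorful τ ht d S Q x y hxτ hy hcol hcnt hQl
    · -- U₂ is nonempty
      subst hU₂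
      have hWx : W = U₁ ++ x :: ((U₂' ++ [u]) ++ E) := by
        rw [hWeq, hU]; simp
      have hdropW : W.drop ((d + 1) * (r - 1)) = u :: E := by
        have hU₁ : (d + 1) * (r - 1) = U₁.length + 1 + U₂'.length := by
          simp at hU₁len; omega
        rw [hWx, hU₁]
        have h2 : U₁ ++ x :: ((U₂' ++ [u]) ++ E) = (U₁ ++ x :: U₂') ++ (u :: E) := by
          simp
        have h3 : (U₁ ++ x :: U₂').length = U₁.length + 1 + U₂'.length := by
          simp; omega
        rw [h2, ← h3]
        have := List.drop_length_add_append (l₁ := U₁ ++ x :: U₂') (l₂ := u :: E) 0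
        simpa using this
      have hcntUE : ∀ a ∈ τ.erase x, 1 ≤ ((U₂' ++ [u]) ++ E).count a := by
        intro a ha
        have h1 := hwinlast a (hsub (mem_of_mem_erase ha))
        rw [hdropW] at h1
        rw [List.take_of_length_le (by simp [hElen]; omega)] at h1
        have h4 : (u :: E).count a ≤ ((U₂' ++ [u]) ++ E).count a := by
          simp only [List.count_cons, List.count_append]
          omega
        omega
      have hne : (τ.erase x).Nonempty := by
        apply Finset.card_pos.mp
        rw [Finset.card_erase_of_mem hxτ]; omega
      obtain ⟨M₁, M₂, Q, y, hM, hy, hQ, hcnt, hQl⟩ :=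
        pick_perm ((U₂' ++ [u]) ++ E) (τ.erase x) hne hcntUE
      refine ⟨(S ++ [x]) ++ Q, U₁ ++ x :: M₁, M₂, y, ?_, ?_, mem_of_mem_erase hy, ?_⟩
      · rw [hWx, hM]; simp
      · have : (S ++ [x]) ++ Q = S ++ (x :: Q) := by simp
        rw [this]
        exact hS.append (hQ.cons₂ x)
      · rw [List.append_assoc]
        exact extend_colorful τ ht d S Q x y hxτ hy hcol hcnt hQl

end Main

theorem statement9 (n d : ℕ) (hd : 1 ≤ d) (W : List (Fin n)) :
    ∀ σ : Finset (Fin n), ContainsColorful d σ W →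
      ∀ τ ⊆ σ, ContainsColorful d τ W := by
  intro σ hσ τ hτ
  obtain ⟨W', hsubW, hcol⟩ := hσ
  obtain ⟨hlen, hwin⟩ := hcol
  rcases Nat.lt_or_ge τ.card 2 with hlt | hge
  · interval_cases h : τ.card
    · -- τ = ∅
      have hτe : τ = ∅ := Finset.card_eq_zero.mp h
      subst hτe
      exact ⟨[], List.nil_sublist _, by simp [IsColorfulWord]⟩
    · -- τ = {x}
      obtain ⟨x, hx⟩ := Finset.card_eq_one.mp h
      subst hx
      have hxσ : x ∈ σ := hτ (Finset.mem_singleton_self x)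
      have hxW' : x ∈ W' := by
        have h1 := hwin 0 (Nat.zero_le _) x hxσ
        have h2 : x ∈ (W'.drop (0 * (σ.card - 1))).take σ.card := by
          apply List.count_pos_iff.mp
          omega
        simp only [Nat.zero_mul, List.drop_zero] at h2
        exact (List.take_sublist _ _).mem h2
      refine ⟨[x], (List.singleton_sublist.mpr hxW').trans hsubW, ?_, ?_⟩
      · simp
      · intro i hi a ha
        simp only [Finset.mem_singleton] at ha
        subst ha
        simp
  · have hσcard : 2 ≤ σ.card := le_trans hge (Finset.card_le_card hτ)
    have hlen' : W'.length = (d + 1) * (σ.card - 1) + 1 := by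
      have hm : min σ.card 1 = 1 := by omega
      rw [hlen, hm]
    obtain ⟨S, U₁, U₂, x, hU, hS, hxτ, hcolS⟩ :=
      main_colorful σ τ hτ hge d W' hlen' hwin
    refine ⟨S ++ [x], ?_, hcolS⟩
    have h2 : List.Sublist (S ++ [x]) (U₁ ++ x :: U₂) := by
      have h3 : List.Sublist [x] (x :: U₂) :=
        List.singleton_sublist.mpr (List.mem_cons_self (a := x) (l := U₂))
      exact hS.append h3
    rw [← hU] at h2
    exact h2.trans hsubW
end

section
/- For every word W on alphabet [n], every d ≥ 1, and every σ ⊆ [n]: W contains a d-colorful subword on alphabet σ if and only if the reduced word red(W) contains a d-colorful subword on alphabet σ. In particular, Δ^d(W) = Δ^d(red(W)), where Δ^d(U) = {σ ⊆ [n] : U contains a d-colorful subword on alphabet σ}. -/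
open Finset

section AuxDestutter

open List

variable {α : Type*} [DecidableEq α]

lemma aux_destutter' :
    ∀ W : List α,
      (∀ (b : α) (L : List α), L.Sublist W → L.Chain' (· ≠ ·) →
        L.Sublist (W.destutter' (· ≠ ·) b)) ∧
      (∀ (a : α) (L : List α), L.Sublist W → (a :: L).Chain' (· ≠ ·) →
        (a :: L).Sublist (W.destutter' (· ≠ ·) a)) := by
  intro W
  induction W with
  | nil =>
    constructor
    · intro b L hL _; simp only [sublist_nil] at hL; simp [hL, List.destutter']
    · intro a L hL _; simp only [sublist_nil] at hL; simp [hL, List.destutter']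
  | cons c W' ih =>
    obtain ⟨ih1, ih2⟩ := ih
    constructor
    · intro b L hL hch
      rw [List.destutter'_cons]
      cases hL with
      | cons _ h =>
        by_cases hbc : b ≠ c
        · rw [if_pos hbc]; exact (ih1 c L h hch).cons b
        · rw [if_neg hbc]; exact ih1 b L h hch
      | cons_cons _ h =>
        by_cases hbc : b ≠ c
        · rw [if_pos hbc]; exact (ih2 c _ h hch).cons b
        · rw [if_neg hbc]; push_neg at hbc; subst hbc
          exact ih2 b _ h hch
    · intro a L hL hch
      rw [List.destutter'_cons]
      cases hL with
      | cons _ h =>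
        by_cases hac : a ≠ c
        · rw [if_pos hac]
          cases L with
          | nil => exact ((nil_sublist _).cons₂ a)
          | cons e L'' =>
            apply Sublist.cons₂
            have hac2 : (e :: L'').Chain' (· ≠ ·) := hch.tail
            exact ih1 c _ h hac2
        · rw [if_neg hac]; push_neg at hac; subst hac
          exact ih2 a L h hch
      | cons_cons _ h =>
        have hac : a ≠ c := (List.isChain_cons_cons.mp hch).1
        rw [if_pos hac]
        exact Sublist.cons₂ a (ih2 c _ h (List.isChain_cons_cons.mp hch).2)

lemma sublist_destutter_of_chain' {W L : List α} (hL : L.Sublist W)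
    (hch : L.Chain' (· ≠ ·)) : L.Sublist (W.destutter (· ≠ ·)) := by
  cases W with
  | nil => simpa using hL
  | cons a W' =>
    rw [List.destutter_cons']
    cases hL with
    | cons _ h => exact (aux_destutter' W').1 a L h hch
    | cons_cons _ h => exact (aux_destutter' W').2 a _ h hch

lemma colorful_chain' {d : ℕ} {σ : Finset α} {L : List α}
    (h : IsColorfulWord d σ L) : L.Chain' (· ≠ ·) := by
  obtain ⟨hlen, hcnt⟩ := h
  set r := σ.card with hr
  by_cases hr2 : r ≤ 1
  · have hrr : r - 1 = 0 := by omega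
    have : L.length ≤ 1 := by rw [hlen, hrr]; simp
    rw [List.Chain', List.isChain_iff_getElem]
    intro i hi
    omega
  · push_neg at hr2
    set s := r - 1 with hs
    have hs1 : 1 ≤ s := by omega
    rw [List.Chain', List.isChain_iff_getElem]
    intro p hp
    have hlen' : L.length = (d + 1) * s + 1 := by
      rw [hlen]; congr 1; omega
    have hp' : p < (d + 1) * s := by omega
    set i := p / s with hi
    have hid : i ≤ d := by
      have : i < d + 1 := (Nat.div_lt_iff_lt_mul hs1).mpr (by omega)
      omega
    have hdm : i * s + p % s = p := by rw [hi, Nat.mul_comm]; exact Nat.div_add_mod p s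
    have h1 : i * s ≤ p := by omega
    have hmod : p - i * s < s := by
      have := Nat.mod_lt p hs1
      omega
    set B := (L.drop (i * s)).take r with hB
    have hBcnt : ∀ a ∈ σ, B.count a = 1 := hcnt i hid
    have his : i * s ≤ d * s := Nat.mul_le_mul_right s hid
    have hBlen : B.length = r := by
      rw [hB, List.length_take, List.length_drop, hlen']
      have : (d+1)*s = d*s + s := by ring
      omega
    have hsub : σ ⊆ B.toFinset := by
      intro a ha
      rw [List.mem_toFinset, ← List.count_pos_iff, hBcnt a ha]; omega
    have hnd : B.Nodup := by
      have h2 : r ≤ B.dedup.length := by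
        rw [← List.card_toFinset]; exact Finset.card_le_card hsub
      have h3 : B.dedup.length ≤ B.length := (List.dedup_sublist B).length_le
      have h4 : B.dedup = B := (List.dedup_sublist B).eq_of_length (by omega)
      exact List.dedup_eq_self.mp h4
    have hoff : p - i * s + 1 < B.length := by omega
    have hub : ∀ k, k < B.length → i * s + k < L.length := by
      intro k hk
      have hds : (d + 1) * s = d * s + s := by ring
      omega
    have hget : ∀ k (hk : k < B.length), B[k] = L[i * s + k]'(hub k hk) := by
      intro k hk
      simp only [hB, List.getElem_take, List.getElem_drop]
    intro heq
    have e1 := hget (p - i * s) (by omega)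
    have e2 := hget (p - i * s + 1) hoff
    have hix1 : i * s + (p - i * s) = p := by omega
    have hix2 : i * s + (p - i * s + 1) = p + 1 := by omega
    have : B[p - i * s]'(by omega) = B[p - i * s + 1]'hoff := by
      rw [e1, e2]
      simp_rw [hix1, hix2]
      exact heq
    rw [hnd.getElem_inj_iff] at this
    omega

end AuxDestutter

theorem statement10 (n d : ℕ) (hd : 1 ≤ d) (W : List (Fin n)) (σ : Finset (Fin n)) :
    ContainsColorful d σ W ↔ ContainsColorful d σ (W.destutter (· ≠ ·)) := by
  constructor
  · rintro ⟨L, hLW, hcol⟩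
    exact ⟨L, sublist_destutter_of_chain' hLW (colorful_chain' hcol), hcol⟩
  · rintro ⟨L, hLd, hcol⟩
    exact ⟨L, hLd.trans (List.destutter_sublist _ W), hcol⟩
end

section
/- Every simplicial complex Δ on vertex set [n] with exactly m facets (m ≥ 1) is (m+1)-colorfully representable. -/
open Finset

namespace Stmt11Aux

open List

variable {α : Type*}

/-- `l` repeated `k` times. -/
def repL (k : ℕ) (l : List α) : List α := (List.replicate k l).flatten

lemma repL_add (k k' : ℕ) (l : List α) : repL (k + k') l = repL k l ++ repL k' l := by
  rw [repL, List.replicate_add, List.flatten_append]; rfl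

lemma repL_sublist {k k' : ℕ} (h : k ≤ k') (l : List α) : (repL k l).Sublist (repL k' l) := by
  obtain ⟨t, rfl⟩ := Nat.exists_eq_add_of_le h
  rw [repL_add]; exact List.sublist_append_left _ _

lemma mem_repL {x : α} {k : ℕ} {l : List α} (h : x ∈ repL k l) : x ∈ l := by
  simp only [repL, List.mem_flatten] at h
  obtain ⟨t, ht, hx⟩ := h
  rw [List.eq_of_mem_replicate ht] at hx; exact hx

lemma sublist_repL : ∀ (l : List α) (L : List α), (∀ x ∈ l, x ∈ L) → l.Sublist (repL l.length L)
  | [], L, _ => by simp [repL]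
  | a :: t, L, h => by
    have h1 : repL (a :: t).length L = L ++ repL t.length L := by
      rw [List.length_cons, show t.length + 1 = 1 + t.length from by omega, repL_add]
      simp [repL]
    rw [h1, show a :: t = [a] ++ t from rfl]
    exact List.Sublist.append (List.singleton_sublist.2 (h a (by simp)))
      (sublist_repL t L fun x hx => h x (by simp [hx]))

/-- zig-zag word: current block `b`, then blocks alternate with reversal. -/
def zig : ℕ → List α → List α
  | 0, b => b
  | k + 1, b => b.dropLast ++ zig k b.reverse

lemma zig_length : ∀ (k : ℕ) (b : List α), b ≠ [] →
    (zig k b).length = k * (b.length - 1) + b.length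
  | 0, b, _ => by simp [zig]
  | k + 1, b, hb => by
    have hb' : b.reverse ≠ [] := by simpa using hb
    have := zig_length k b.reverse hb'
    have hlen : (0:ℕ) < b.length := List.length_pos_iff.2 hb
    simp only [zig, List.length_append, List.length_dropLast, this, List.length_reverse]
    have : (k+1) * (b.length - 1) = (b.length - 1) + k * (b.length - 1) := by ring
    omega

lemma zig_take : ∀ (k : ℕ) (b : List α), b ≠ [] → (zig k b).take b.length = b
  | 0, b, _ => by simp [zig]
  | k + 1, b, hb => by
    have hb' : b.reverse ≠ [] := by simpa using hb
    have hlen : (0:ℕ) < b.length := List.length_pos_iff.2 hb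
    have ih := zig_take k b.reverse hb'
    rw [List.length_reverse] at ih
    have h1 : (zig k b.reverse).take 1 = [b.getLast hb] := by
      have h2 : (zig k b.reverse).take 1 = ((zig k b.reverse).take b.length).take 1 := by
        rw [List.take_take]; congr 1; omega
      rw [h2, ih]
      conv_lhs => rw [← List.dropLast_append_getLast hb]
      simp
    simp only [zig, List.take_append, List.length_dropLast]
    rw [List.take_of_length_le (by rw [List.length_dropLast]; omega),
      show b.length - (b.length - 1) = 1 from by omega, h1,
      List.dropLast_append_getLast hb]

lemma zig_block : ∀ (k : ℕ) (b : List α), b ≠ [] → ∀ i ≤ k,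
    (((zig k b).drop (i * (b.length - 1))).take b.length).Perm b
  | 0, b, hb, i, hi => by
    interval_cases i
    simp only [Nat.zero_mul, List.drop_zero]
    rw [List.take_of_length_le (by simp [zig])]
    simp [zig]
  | k + 1, b, hb, i, hi => by
    have hb' : b.reverse ≠ [] := by simpa using hb
    match i with
    | 0 =>
      simp only [Nat.zero_mul, List.drop_zero]
      rw [zig_take (k+1) b hb]
    | i' + 1 =>
      have hi' : i' ≤ k := by omega
      have h2 : (i' + 1) * (b.length - 1) = b.dropLast.length + i' * (b.length - 1) := by
        rw [List.length_dropLast]; ring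
      simp only [zig]
      rw [h2, List.drop_length_add_append]
      have ih := zig_block k b.reverse hb' i' hi'
      rw [List.length_reverse] at ih
      exact ih.trans (List.reverse_perm b)

lemma zig_subset : ∀ (k : ℕ) (b : List α) (x : α), x ∈ zig k b → x ∈ b
  | 0, b, x, h => h
  | k + 1, b, x, h => by
    simp only [zig, List.mem_append] at h
    rcases h with h | h
    · exact (List.dropLast_sublist b).mem h
    · simpa using zig_subset k b.reverse x h


lemma exists_parts : ∀ (L : List (List α)) (l : List α), l.Sublist L.flatten →
    ∃ P : List (List α), l = P.flatten ∧ List.Forall₂ (· <+ ·) P L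
  | [], l, h => by
    refine ⟨[], ?_, List.Forall₂.nil⟩
    simpa using List.sublist_nil.1 (by simpa using h)
  | A :: L, l, h => by
    rw [List.flatten_cons, List.sublist_append_iff] at h
    obtain ⟨l₁, l₂, rfl, h1, h2⟩ := h
    obtain ⟨P, rfl, hP⟩ := exists_parts L l₂ h2
    exact ⟨l₁ :: P, by simp, List.Forall₂.cons h1 hP⟩

lemma slice {P : List (List α)} {j s t : ℕ} (hj : j < P.length)
    (hs : ((P.take j).flatten).length ≤ s)
    (ht : s + t ≤ ((P.take (j + 1)).flatten).length) :
    ((P.flatten.drop s).take t).Sublist (P.get ⟨j, hj⟩) := by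
  have hPj : P.take (j + 1) = P.take j ++ [P.get ⟨j, hj⟩] := by
    rw [← List.take_concat_get hj]; simp
  have hflat : P.flatten = (P.take j).flatten ++ (P.get ⟨j, hj⟩ ++ (P.drop (j + 1)).flatten) := by
    conv_lhs => rw [← List.take_append_drop (j + 1) P]
    rw [hPj]
    rw [List.flatten_append, List.flatten_append]
    simp
  obtain ⟨s', rfl⟩ := Nat.exists_eq_add_of_le hs
  rw [hPj, List.flatten_append, List.length_append] at ht
  simp only [List.flatten_cons, List.flatten_nil, List.append_nil] at ht
  rw [hflat, List.drop_length_add_append]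
  have hst : s' + t ≤ (P.get ⟨j, hj⟩).length := by omega
  rw [List.drop_append,
    List.take_append_of_le_length (by rw [List.length_drop]; omega)]
  exact ((List.take_sublist _ _).trans (List.drop_sublist _ _))

lemma jump_aux {f : ℕ → ℕ} : ∀ m : ℕ, (∀ j < m, f (j + 1) ≤ f j + 1) → f m ≤ f 0 + m
  | 0, _ => by omega
  | m + 1, h => by
    have := jump_aux m (fun j hj => h j (by omega))
    have := h m (by omega)
    omega

lemma ceil_mul_ge {a q : ℕ} (hq : 1 ≤ q) : a ≤ ((a + q - 1) / q) * q := by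
  have h1 : (a + q - 1) / q < (a + q - 1) / q + 1 := by omega
  have h2 := (Nat.div_lt_iff_lt_mul hq).1 h1
  rw [Nat.add_mul] at h2
  set D := (a + q - 1) / q * q
  omega

lemma ceil_le {a q i : ℕ} (hq : 1 ≤ q) (h : a ≤ i * q) : (a + q - 1) / q ≤ i := by
  have h1 : (a + q - 1) / q < i + 1 := by
    rw [Nat.div_lt_iff_lt_mul hq, Nat.add_mul]
    omega
  omega

end Stmt11Aux


theorem statement11 (n m : ℕ) (hm : 1 ≤ m) (Δ : Set (Finset (Fin n)))
    (hΔ : ∀ σ ∈ Δ, ∀ τ ⊆ σ, τ ∈ Δ)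
    (hfac : {σ : Finset (Fin n) | IsFacet Δ σ}.ncard = m) :
    ColorfullyRep (m + 1) Δ := by
  classical
  have hfin : {σ : Finset (Fin n) | IsFacet Δ σ}.Finite := Set.toFinite _
  set facs : List (Finset (Fin n)) := hfin.toFinset.toList with hfacs
  have hlenfacs : facs.length = m := by
    rw [hfacs, Finset.length_toList, ← Set.ncard_eq_toFinset_card _ hfin, hfac]
  have hmemfacs : ∀ F, F ∈ facs ↔ IsFacet Δ F := by
    intro F; rw [hfacs, Finset.mem_toList, Set.Finite.mem_toFinset]; rfl
  have hface_ext : ∀ σ ∈ Δ, ∃ F ∈ facs, σ ⊆ F := by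
    intro σ hσ
    have hne : (Δ ∩ {τ | σ ⊆ τ}).Nonempty := ⟨σ, hσ, by simp⟩
    obtain ⟨τ, ⟨hτΔ, hστ⟩, hmax⟩ :=
      Set.Finite.exists_maximalFor Finset.card _ (Set.toFinite _) hne
    refine ⟨τ, (hmemfacs τ).2 ⟨hτΔ, ?_⟩, hστ⟩
    intro τ' hτ' hsubτ
    exact Finset.eq_of_subset_of_card_le hsubτ
      (hmax (j := τ') ⟨hτ', hστ.trans hsubτ⟩ (Finset.card_le_card hsubτ))
  set c := (m + 2) * n + 1 with hc
  set zone : Finset (Fin n) → List (Fin n) := fun F => Stmt11Aux.repL c (F.sort (· ≤ ·))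
    with hzone
  set W : List (Fin n) := (facs.map zone).flatten with hW
  refine ⟨W, fun σ => ⟨fun hσ => ?_, fun hcc => ?_⟩⟩
  · -- forward direction
    rcases Finset.eq_empty_or_nonempty σ with rfl | hne
    · exact ⟨[], List.nil_sublist _, by simp [IsColorfulWord]⟩
    · obtain ⟨F, hFf, hσF⟩ := hface_ext σ hσ
      set s := σ.sort (· ≤ ·) with hs
      have hslen : s.length = σ.card := Finset.length_sort _
      have hr1 : 1 ≤ σ.card := hne.card_pos
      have hsne : s ≠ [] := List.ne_nil_of_length_pos (by omega)
      refine ⟨Stmt11Aux.zig (m + 1) s, ?_, ?_, ?_⟩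
      · have h1 : (Stmt11Aux.zig (m + 1) s).Sublist
            (Stmt11Aux.repL (Stmt11Aux.zig (m + 1) s).length (F.sort (· ≤ ·))) := by
          refine Stmt11Aux.sublist_repL _ _ (fun x hx => ?_)
          have hx1 : x ∈ σ := (Finset.mem_sort _).1 (Stmt11Aux.zig_subset _ _ _ hx)
          exact (Finset.mem_sort _).2 (hσF hx1)
        have hrn : σ.card ≤ n := by
          have := Finset.card_le_card (Finset.subset_univ σ)
          simpa using this
        have h2 : (Stmt11Aux.zig (m + 1) s).length ≤ c := by
          rw [Stmt11Aux.zig_length _ _ hsne, hslen, hc]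
          obtain ⟨u, hu⟩ : ∃ u, σ.card = u + 1 := ⟨σ.card - 1, by omega⟩
          rw [hu]
          simp only [Nat.add_sub_cancel]
          calc (m + 1) * u + (u + 1) = (m + 2) * u + 1 := by ring
            _ ≤ (m + 2) * n + 1 := by
                have : u ≤ n := by omega
                exact Nat.add_le_add_right (Nat.mul_le_mul_left _ this) 1
        exact h1.trans ((Stmt11Aux.repL_sublist h2 _).trans
          (List.sublist_flatten_of_mem (List.mem_map_of_mem (f := zone) hFf)))
      · rw [Stmt11Aux.zig_length _ _ hsne, hslen]
        obtain ⟨u, hu⟩ : ∃ u, σ.card = u + 1 := ⟨σ.card - 1, by omega⟩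
        rw [hu]
        simp only [Nat.add_sub_cancel]
        rw [Nat.min_eq_right (by omega)]
        ring
      · intro i hi x hx
        have hp := Stmt11Aux.zig_block (m + 1) s hsne i hi
        rw [hslen] at hp
        rw [hp.count_eq]
        exact List.count_eq_one_of_mem (Finset.sort_nodup _ _) ((Finset.mem_sort _).2 hx)
  · -- backward direction
    obtain ⟨W', hsub, hlen, hcount⟩ := hcc
    have hfacs_ne : facs ≠ [] := by
      intro h; rw [h] at hlenfacs; simp at hlenfacs; omega
    rcases Finset.eq_empty_or_nonempty σ with rfl | hne
    · obtain ⟨F, hF⟩ := List.exists_mem_of_ne_nil facs hfacs_ne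
      exact hΔ F ((hmemfacs F).1 hF).1 ∅ (Finset.empty_subset F)
    · have hr1 : 1 ≤ σ.card := hne.card_pos
      have hmemW : ∀ x ∈ W, ∃ F ∈ facs, x ∈ F := by
        intro x hxW
        rw [hW, List.mem_flatten] at hxW
        obtain ⟨l, hl, hxl⟩ := hxW
        rw [List.mem_map] at hl
        obtain ⟨F, hF, rfl⟩ := hl
        exact ⟨F, hF, (Finset.mem_sort _).1 (Stmt11Aux.mem_repL hxl)⟩
      rcases eq_or_lt_of_le hr1 with h1 | h2
      · -- σ.card = 1
        obtain ⟨x, rfl⟩ := Finset.card_eq_one.1 h1.symm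
        have hcx := hcount 0 (by omega) x (by simp)
        have hxW' : x ∈ W' := by
          have : 0 < ((W'.drop (0 * (({x} : Finset (Fin n)).card - 1))).take
              ({x} : Finset (Fin n)).card).count x := by omega
          exact ((List.take_sublist _ _).trans (List.drop_sublist _ _)).mem
            (List.count_pos_iff.1 this)
        obtain ⟨F, hF, hxF⟩ := hmemW x (hsub.mem hxW')
        exact hΔ F ((hmemfacs F).1 hF).1 {x} (Finset.singleton_subset_iff.2 hxF)
      · -- σ.card ≥ 2
        set q := σ.card - 1 with hqdef
        have hq1 : 1 ≤ q := by omega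
        obtain ⟨P, hW'eq, hP⟩ := Stmt11Aux.exists_parts (facs.map zone) W' hsub
        have hPlen : P.length = m := by rw [hP.length_eq, List.length_map, hlenfacs]
        set al : ℕ → ℕ := fun j => ((P.take j).flatten).length with hal
        set f : ℕ → ℕ := fun j => (al j + q - 1) / q with hf
        have hamono : ∀ j, al j ≤ al (j + 1) := by
          intro j
          simp only [hal]
          rw [List.take_succ, List.flatten_append, List.length_append]
          omega
        have hfmono : Monotone f := monotone_nat_of_le_succ
          (fun j => Nat.div_le_div_right (by have := hamono j; omega))
        have hf0 : f 0 = 0 := by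
          simp only [hf, hal, List.take_zero, List.flatten_nil, List.length_nil, Nat.zero_add]
          exact Nat.div_eq_of_lt (by omega)
        have ham : al m = (m + 2) * q + 1 := by
          have hPm : P.take m = P := by rw [← hPlen]; exact List.take_length (l := P)
          simp only [hal, hPm, ← hW'eq, hlen, Nat.min_eq_right (show 1 ≤ σ.card by omega)]
        have hfm : f m = m + 3 := by
          simp only [hf, ham]
          have e : (m + 3) * q = (m + 2) * q + q := by ring
          rw [show (m + 2) * q + 1 + q - 1 = (m + 3) * q from by omega,
            Nat.mul_div_cancel _ (by omega : 0 < q)]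
        have hjump : ∃ j < m, f j + 2 ≤ f (j + 1) := by
          by_contra hno
          push_neg at hno
          have := Stmt11Aux.jump_aux (f := f) m (fun j hj => by have := hno j hj; omega)
          omega
        obtain ⟨j, hjm, hjf⟩ := hjump
        set i := f j with hidef
        have him : i ≤ m + 1 := by
          have h5 : f (j + 1) ≤ f m := hfmono (by omega : j + 1 ≤ m)
          omega
        have hA : al j ≤ i * q := Stmt11Aux.ceil_mul_ge hq1
        have hB : i * q + σ.card ≤ al (j + 1) := by
          by_contra hcon
          push_neg at hcon
          have e : (i + 1) * q = i * q + q := by ring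
          have h3 : al (j + 1) ≤ (i + 1) * q := by omega
          have h4 : f (j + 1) ≤ i + 1 := Stmt11Aux.ceil_le hq1 h3
          omega
        have hjP : j < P.length := by omega
        have hblock := Stmt11Aux.slice hjP hA hB
        have hj2 : j < (facs.map zone).length := by rw [List.length_map, hlenfacs]; omega
        have hzsub := hP.get hjP hj2
        have hj3 : j < facs.length := by rw [hlenfacs]; omega
        have hgetmap : (facs.map zone).get ⟨j, hj2⟩ = zone (facs.get ⟨j, hj3⟩) := by
          simp
        set F := facs.get ⟨j, hj3⟩ with hFdef
        have hFfac : F ∈ facs := List.get_mem _ _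
        have hσF : σ ⊆ F := by
          intro x hx
          have hc1 := hcount i him x hx
          have hx1 : x ∈ (W'.drop (i * q)).take σ.card :=
            List.count_pos_iff.1 (by omega)
          rw [hW'eq] at hx1
          have hx2 : x ∈ P.get ⟨j, hjP⟩ := hblock.mem hx1
          have hx3 : x ∈ zone F := (hgetmap ▸ hzsub).mem hx2
          exact (Finset.mem_sort _).1 (Stmt11Aux.mem_repL hx3)
        exact hΔ F ((hmemfacs F).1 hFfac).1 σ hσF
end

section
/- Let Δ be a simplicial complex on vertex set [n] that is a cone. Then for every integer d ≥ 1, Δ is d-Tverberg if and only if Δ is weakly d-Tverberg. -/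
open Finset

theorem statement13 (n d : ℕ) (hd : 1 ≤ d) (Δ : Set (Finset (Fin n)))
    (hΔ : ∀ σ ∈ Δ, ∀ τ ⊆ σ, τ ∈ Δ)
    (hcone : ∃ v : Fin n, ∀ σ : Finset (Fin n), IsFacet Δ σ → v ∈ σ) :
    IsTverberg d Δ ↔ WeaklyTverberg d Δ := by
  classical
  constructor
  · rintro ⟨C, hC⟩
    exact ⟨C, fun P hP hc => by
      obtain ⟨Q, h1, _, h3⟩ := hC P hP hc; exact ⟨Q, h1, h3⟩⟩
  · rintro ⟨C, hC⟩
    obtain ⟨v, hv⟩ := hcone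
    -- cone closure lemma
    have hins : ∀ τ ∈ Δ, insert v τ ∈ Δ := by
      intro τ hτ
      have hS : (Finset.univ.filter (fun ρ : Finset (Fin n) => ρ ∈ Δ ∧ τ ⊆ ρ)).Nonempty :=
        ⟨τ, by simp [hτ]⟩
      obtain ⟨ρ, hρ, hmax⟩ :=
        (Finset.univ.filter (fun ρ : Finset (Fin n) => ρ ∈ Δ ∧ τ ⊆ ρ)).exists_max_image
          Finset.card hS
      simp only [Finset.mem_filter, Finset.mem_univ, true_and] at hρ
      have hfacet : IsFacet Δ ρ := by
        refine ⟨hρ.1, fun τ' hτ' hsub => ?_⟩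
        have hτ'mem : τ' ∈ Finset.univ.filter (fun ρ : Finset (Fin n) => ρ ∈ Δ ∧ τ ⊆ ρ) := by
          simp only [Finset.mem_filter, Finset.mem_univ, true_and]
          exact ⟨hτ', hρ.2.trans hsub⟩
        exact Finset.eq_of_subset_of_card_le hsub (hmax τ' hτ'mem)
      have hvρ : v ∈ ρ := hv ρ hfacet
      exact hΔ ρ hρ.1 _ (Finset.insert_subset hvρ hρ.2)
    refine ⟨C, fun P hP hc => ?_⟩
    obtain ⟨Q, hQP, hdisj, hiff⟩ := hC P hP hc
    set R : Finset (Pt d) := P.filter (fun x => ∀ i, x ∉ Q i) with hRdef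
    set Q' : Fin n → Finset (Pt d) := fun i => if i = v then Q v ∪ R else Q i with hQ'def
    have hsub : ∀ i, Q i ⊆ Q' i := by
      intro i
      simp only [hQ'def]
      split
      · next h => subst h; exact Finset.subset_union_left
      · exact subset_rfl
    have hRQ : ∀ x ∈ R, ∀ i, x ∉ Q i := by
      intro x hx
      simpa [hRdef] using (Finset.mem_filter.1 hx).2
    have hQ'eq : ∀ i, i ≠ v → Q' i = Q i := by
      intro i hi; simp [hQ'def, hi]
    refine ⟨Q', ?_, ?_, ?_, ?_⟩
    · intro i
      simp only [hQ'def]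
      split
      · exact Finset.union_subset (hQP v) (Finset.filter_subset _ _)
      · exact hQP i
    · intro x hx
      by_cases h : ∃ i, x ∈ Q i
      · obtain ⟨i, hi⟩ := h
        exact ⟨i, hsub i hi⟩
      · push_neg at h
        refine ⟨v, ?_⟩
        have hxR : x ∈ R := by simp [hRdef, hx, h]
        simp [hQ'def, Finset.mem_union, hxR]
    · intro i j hij
      have hRd : ∀ k, Disjoint R (Q k) := by
        intro k
        rw [Finset.disjoint_left]
        intro x hx
        exact hRQ x hx k
      have hQ'v : Q' v = Q v ∪ R := by simp [hQ'def]
      by_cases hi : i = v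
      · have hjv : j ≠ v := fun h => hij (hi.trans h.symm)
        rw [hQ'eq j hjv, hi, hQ'v]
        exact Finset.disjoint_union_left.2
          ⟨hdisj v j (fun h => hjv h.symm), hRd j⟩
      · rw [hQ'eq i hi]
        by_cases hj : j = v
        · rw [hj, hQ'v]
          exact Finset.disjoint_union_right.2
            ⟨hdisj i v hi, (hRd i).symm⟩
        · rw [hQ'eq j hj]
          exact hdisj i j hij
    · intro σ
      by_cases hvσ : v ∈ σ
      · constructor
        · rintro ⟨y, hy⟩
          by_contra hσ
          by_cases hτ : σ.erase v ∈ Δ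
          · exact hσ (by
              have := hins _ hτ
              rwa [Finset.insert_erase hvσ] at this)
          · refine hτ ((hiff (σ.erase v)).1 ⟨y, ?_⟩)
            simp only [Set.mem_iInter] at hy ⊢
            intro i hi
            have hiv : i ≠ v := Finset.ne_of_mem_erase hi
            have := hy i (Finset.mem_of_mem_erase hi)
            rwa [hQ'eq i hiv] at this
        · intro hσ
          obtain ⟨y, hy⟩ := (hiff σ).2 hσ
          refine ⟨y, ?_⟩
          simp only [Set.mem_iInter] at hy ⊢
          intro i hi
          exact convexHull_mono (Finset.coe_subset.2 (hsub i)) (hy i hi)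
      · have heq : (⋂ i ∈ σ, convexHull ℝ ((Q' i : Set (Pt d)))) =
            ⋂ i ∈ σ, convexHull ℝ ((Q i : Set (Pt d))) := by
          apply Set.iInter₂_congr
          intro i hi
          rw [hQ'eq i (fun h => hvσ (h ▸ hi))]
        rw [heq]
        exact hiff σ
end

section
/- If a simplicial complex Δ on vertex set [n] is d-colorfully representable for some integer d ≥ 1, then Δ is (d+1)-colorfully representable. -/
open Finset

namespace Colorful15

variable {α : Type*} [DecidableEq α]

/-- dedup keeping first occurrences -/
def ldedup : List α → List α
  | [] => []
  | a :: l => a :: (ldedup l).filter (· ≠ a)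

@[simp] lemma mem_ldedup {x : α} : ∀ {l : List α}, x ∈ ldedup l ↔ x ∈ l
  | [] => by simp [ldedup]
  | a :: l => by
    by_cases hx : x = a <;>
      simp [ldedup, List.mem_filter, hx, mem_ldedup (l := l)]

lemma nodup_ldedup : ∀ (l : List α), (ldedup l).Nodup
  | [] => by simp [ldedup]
  | a :: l => by
    simp only [ldedup, List.nodup_cons]
    refine ⟨?_, (nodup_ldedup l).filter _⟩
    simp [List.mem_filter]

lemma ldedup_filter_head (p : α → Bool) :
    ∀ (l : List α) (b : α) (t : List α), (ldedup l).filter p = b :: t →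
      ∃ u v, l = u ++ b :: v ∧ ∀ x ∈ u, ¬ p x
  | [], b, t, h => by simp [ldedup] at h
  | a :: l, b, t, h => by
    simp only [ldedup, List.filter_cons] at h
    by_cases hpa : p a
    · simp only [hpa, if_pos] at h
      obtain ⟨rfl, -⟩ := List.cons_eq_cons.mp h
      exact ⟨[], l, rfl, by simp⟩
    · simp only [hpa, Bool.false_eq_true, if_false] at h
      rw [List.filter_filter] at h
      have hcong : ((ldedup l).filter fun x => p x && decide (x ≠ a)) = (ldedup l).filter p := by
        apply List.filter_congr
        intro x _
        by_cases hx : p x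
        · have : x ≠ a := fun hxa => hpa (hxa ▸ hx)
          simp [hx, this]
        · simp [hx]
      rw [hcong] at h
      obtain ⟨u, v, rfl, hu⟩ := ldedup_filter_head p l b t h
      exact ⟨a :: u, v, rfl, by
        intro x hx
        rcases List.mem_cons.mp hx with rfl | hx
        · exact fun hc => hpa hc
        · exact hu x hx⟩

lemma block_coe {s : Finset α} {l : List α} (hlen : l.length = s.card)
    (hc : ∀ a ∈ s, l.count a = 1) : (l : Multiset α) = s.val := by
  have hle : s.val ≤ (l : Multiset α) := by
    rw [Multiset.le_iff_count]
    intro a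
    by_cases ha : a ∈ s
    · have h1 : Multiset.count a s.val = 1 := Multiset.count_eq_one_of_mem s.nodup ha
      have h2 : Multiset.count a (l : Multiset α) = l.count a := Multiset.coe_count a l
      rw [h1, h2, hc a ha]
    · have : Multiset.count a s.val = 0 := Multiset.count_eq_zero_of_notMem ha
      simp [this]
  exact (Multiset.eq_of_le_of_card_le hle (by simp [hlen])).symm

lemma block_mem {s : Finset α} {l : List α} (hlen : l.length = s.card)
    (hc : ∀ a ∈ s, l.count a = 1) : ∀ x ∈ l, x ∈ s := by
  intro x hx
  have h := block_coe hlen hc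
  have hx' : x ∈ (l : Multiset α) := by exact_mod_cast hx
  rw [h] at hx'
  exact hx'

lemma colorful_drop {d : ℕ} {s : Finset α} {Y : List α}
    (h : IsColorfulWord (d + 1) s Y) :
    IsColorfulWord d s (Y.drop (s.card - 1)) := by
  obtain ⟨hlen, hcount⟩ := h
  have hmul : (d + 1 + 1) * (s.card - 1) = (d + 1) * (s.card - 1) + (s.card - 1) := by ring
  constructor
  · rw [List.length_drop, hlen, hmul]
    omega
  · intro i hi a ha
    rw [List.drop_drop]
    have harith : s.card - 1 + i * (s.card - 1) = (i + 1) * (s.card - 1) := by ring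
    rw [harith]
    exact hcount (i + 1) (by omega) a ha

lemma mem_of_colorful : ∀ (d : ℕ) {s : Finset α} {Y : List α},
    IsColorfulWord d s Y → ∀ x ∈ Y, x ∈ s := by
  intro d
  induction d with
  | zero =>
    intro s Y h x hx
    obtain ⟨hlen, hcount⟩ := h
    rcases Nat.eq_zero_or_pos s.card with hc | hc
    · exfalso
      have : Y.length = 0 := by rw [hlen, hc]; simp
      rw [List.length_eq_zero_iff] at this
      simp [this] at hx
    · have hYlen : Y.length = s.card := by rw [hlen]; omega
      have : ∀ a ∈ s, Y.count a = 1 := by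
        intro a ha
        have := hcount 0 (le_refl 0) a ha
        simpa [List.take_of_length_le hYlen.le] using this
      exact block_mem hYlen this x hx
  | succ d ih =>
    intro s Y h x hx
    obtain ⟨hlen, hcount⟩ := h
    rcases Nat.eq_zero_or_pos s.card with hc | hc
    · exfalso
      have : Y.length = 0 := by rw [hlen, hc]; simp
      rw [List.length_eq_zero_iff] at this
      simp [this] at hx
    · have hYlen : s.card ≤ Y.length := by
        rw [hlen]
        have : 1 * (s.card - 1) ≤ (d + 1 + 1) * (s.card - 1) :=
          Nat.mul_le_mul_right _ (by omega)
        omega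
      have hsplit : x ∈ Y.take s.card ∨ x ∈ Y.drop s.card := by
        rcases List.mem_append.mp ((List.take_append_drop s.card Y) ▸ hx) with h1 | h2
        · exact Or.inl h1
        · exact Or.inr h2
      rcases hsplit with h1 | h2
      · have htake : (Y.take s.card).length = s.card := by
          rw [List.length_take]; omega
        have hcnt : ∀ a ∈ s, (Y.take s.card).count a = 1 := by
          intro a ha
          simpa using hcount 0 (Nat.zero_le _) a ha
        exact block_mem htake hcnt x h1
      · have hdd : Y.drop s.card = (Y.drop (s.card - 1)).drop 1 := by
          rw [List.drop_drop]
          congr 1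
          omega
        refine ih (colorful_drop ⟨hlen, hcount⟩) x ?_
        exact List.drop_subset 1 _ (hdd ▸ h2)

lemma forward {d : ℕ} {σ : Finset α} {W X : List α}
    (hXW : X.Sublist W) (hX : IsColorfulWord d σ X) :
    ContainsColorful (d + 1) σ ((ldedup W).reverse ++ W) := by
  obtain ⟨hXlen, hXc⟩ := hX
  rcases le_or_gt σ.card 1 with hr | hr
  · refine ⟨X, hXW.trans (List.sublist_append_right _ _), ?_, ?_⟩
    · rw [hXlen]
      have h0 : σ.card - 1 = 0 := by omega
      simp [h0]
    · intro i hi a ha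
      have h0 : σ.card - 1 = 0 := by omega
      have := hXc 0 (Nat.zero_le _) a ha
      simpa [h0] using this
  · have hmin : min σ.card 1 = 1 := by omega
    have hXne : X ≠ [] := by
      have : 0 < X.length := by rw [hXlen, hmin]; exact Nat.succ_pos _
      exact List.ne_nil_of_length_pos this
    obtain ⟨b, X2, hX2⟩ := List.exists_cons_of_ne_nil hXne
    have hbσ : b ∈ σ := mem_of_colorful d ⟨hXlen, hXc⟩ _ (by rw [hX2]; simp)
    have hmemXσ : ∀ x ∈ σ, x ∈ X := by
      intro x hx
      have h1 := hXc 0 (Nat.zero_le _) x hx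
      rw [Nat.zero_mul] at h1
      have h2 : x ∈ (X.drop 0).take σ.card := by
        have : 0 < ((X.drop 0).take σ.card).count x := by rw [h1]; omega
        exact List.count_pos_iff.mp this
      simpa using List.take_subset _ _ (by simpa using h2)
    set K := ((ldedup W).reverse).filter (· ∈ σ.erase b) with hK
    have hKnodup : K.Nodup := (List.nodup_reverse.mpr (nodup_ldedup W)).filter _
    have hKfin : K.toFinset = σ.erase b := by
      ext x
      simp only [List.mem_toFinset, hK, List.mem_filter, List.mem_reverse, mem_ldedup,
        decide_eq_true_eq]
      constructor
      · rintro ⟨-, hx⟩; exact hx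
      · intro hx
        exact ⟨hXW.subset (hmemXσ x (Finset.mem_of_mem_erase hx)), hx⟩
    have hKlen : K.length = σ.card - 1 := by
      rw [← List.toFinset_card_of_nodup hKnodup, hKfin, Finset.card_erase_of_mem hbσ]
    refine ⟨K ++ X, List.Sublist.append List.filter_sublist hXW, ?_, ?_⟩
    · rw [List.length_append, hKlen, hXlen, hmin]
      ring
    · intro i hi a ha
      cases i with
      | zero =>
        simp only [Nat.zero_mul, List.drop_zero]
        have htk : (K ++ X).take σ.card = K ++ [b] := by
          rw [List.take_append, List.take_of_length_le (by rw [hKlen]; omega),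
            hKlen]
          have h1 : σ.card - (σ.card - 1) = 1 := by omega
          rw [h1, hX2]
          simp
        rw [htk, List.count_append]
        by_cases hab : a = b
        · subst hab
          have hnm : a ∉ K := by
            intro hmem
            have := (List.mem_filter.mp (hK ▸ hmem)).2
            simp only [decide_eq_true_eq] at this
            exact (Finset.notMem_erase a σ) this
          rw [List.count_eq_zero_of_not_mem hnm]
          simp
        · have haK : a ∈ K := by
            rw [hK]
            simp only [List.mem_filter, List.mem_reverse, mem_ldedup, decide_eq_true_eq]
            exact ⟨hXW.subset (hmemXσ a ha), Finset.mem_erase.mpr ⟨hab, ha⟩⟩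
          rw [List.count_eq_one_of_mem hKnodup haK]
          simp [hab, Ne.symm hab, List.count_singleton]
      | succ i =>
        have hdrop : (K ++ X).drop ((i + 1) * (σ.card - 1)) = X.drop (i * (σ.card - 1)) := by
          rw [List.drop_append, List.drop_eq_nil_of_le, List.nil_append]
          · congr 1
            rw [hKlen]
            have hmul : (i + 1) * (σ.card - 1) = i * (σ.card - 1) + (σ.card - 1) := by ring
            rw [hmul, Nat.add_sub_cancel]
          · rw [hKlen]
            calc σ.card - 1 = 1 * (σ.card - 1) := (one_mul _).symm
              _ ≤ (i + 1) * (σ.card - 1) := Nat.mul_le_mul_right _ (by omega)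
        rw [hdrop]
        exact hXc i (by omega) a ha

lemma backward {d : ℕ} {σ : Finset α} {W : List α}
    (h : ContainsColorful (d + 1) σ ((ldedup W).reverse ++ W)) :
    ContainsColorful d σ W := by
  obtain ⟨Y, hYsub, hYcol⟩ := h
  rcases lt_or_ge σ.card 2 with hr | hr
  · have h01 : σ.card = 0 ∨ σ.card = 1 := by omega
    rcases h01 with hc | hc
    · refine ⟨[], List.nil_sublist _, ?_, ?_⟩
      · simp [hc]
      · intro i hi a ha
        rw [Finset.card_eq_zero] at hc; subst hc; simp at ha
    · obtain ⟨a, rfl⟩ := Finset.card_eq_one.mp hc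
      obtain ⟨hYlen, hYc⟩ := hYcol
      have hY1 : Y.length = 1 := by simpa using hYlen
      obtain ⟨y, rfl⟩ := List.length_eq_one_iff.mp hY1
      have hcnt := hYc 0 (Nat.zero_le _) a (Finset.mem_singleton_self a)
      have hya : y = a := by
        by_contra hne
        simp [List.count_singleton', hne] at hcnt
      subst hya
      have haW : y ∈ W := by
        have hmem : y ∈ (ldedup W).reverse ++ W := hYsub.subset (by simp)
        rcases List.mem_append.mp hmem with h1 | h1
        · rw [List.mem_reverse, mem_ldedup] at h1; exact h1
        · exact h1
      refine ⟨[y], List.singleton_sublist.mpr haW, ?_, ?_⟩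
      · simp
      · intro i hi c hc'
        rw [Finset.mem_singleton] at hc'; subst hc'; simp
  · obtain ⟨hYlen, hYc⟩ := hYcol
    obtain ⟨Y1, Y2, hYeq, hY1, hY2⟩ := List.sublist_append_iff.mp hYsub
    have hmemσ : ∀ x ∈ Y, x ∈ σ := mem_of_colorful _ ⟨hYlen, hYc⟩
    have hcol' : IsColorfulWord d σ (Y.drop (σ.card - 1)) := colorful_drop ⟨hYlen, hYc⟩
    have hY1nd : Y1.Nodup := hY1.nodup (List.nodup_reverse.mpr (nodup_ldedup W))
    have hY1sub : ∀ x ∈ Y1, x ∈ σ := fun x hx => hmemσ x (hYeq ▸ List.mem_append_left _ hx)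
    have hY1le : Y1.length ≤ σ.card := by
      rw [← List.toFinset_card_of_nodup hY1nd]
      exact Finset.card_le_card (fun x hx => hY1sub x (List.mem_toFinset.mp hx))
    rcases lt_or_eq_of_le hY1le with hlt | heq
    · refine ⟨Y.drop (σ.card - 1), ?_, hcol'⟩
      rw [hYeq, List.drop_append, List.drop_eq_nil_of_le (by omega),
        List.nil_append]
      exact (List.drop_sublist _ _).trans hY2
    · have hσW : ∀ a ∈ σ, a ∈ W := by
        intro a ha
        have h0 := hYc 0 (Nat.zero_le _) a ha
        rw [Nat.zero_mul] at h0
        have haY : a ∈ Y := by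
          have hmem : a ∈ (Y.drop 0).take σ.card := by
            have : 0 < ((Y.drop 0).take σ.card).count a := by rw [h0]; omega
            exact List.count_pos_iff.mp this
          simpa using List.take_subset _ _ (by simpa using hmem)
        rcases List.mem_append.mp (hYsub.subset haY) with h1 | h1
        · rw [List.mem_reverse, mem_ldedup] at h1; exact h1
        · exact h1
      set F := (ldedup W).filter (· ∈ σ) with hF
      have hGnd : ((ldedup W).reverse.filter (· ∈ σ)).Nodup :=
        (List.nodup_reverse.mpr (nodup_ldedup W)).filter _
      have hGfin : ((ldedup W).reverse.filter (· ∈ σ)).toFinset = σ := by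
        ext x
        simp only [List.mem_toFinset, List.mem_filter, List.mem_reverse, mem_ldedup,
          decide_eq_true_eq]
        exact ⟨fun hx => hx.2, fun hx => ⟨hσW x hx, hx⟩⟩
      have hGlen : ((ldedup W).reverse.filter (· ∈ σ)).length = σ.card := by
        rw [← List.toFinset_card_of_nodup hGnd, hGfin]
      have hY1G : Y1 = (ldedup W).reverse.filter (· ∈ σ) := by
        have hfself : Y1.filter (· ∈ σ) = Y1 :=
          List.filter_eq_self.mpr (by intro x hx; simpa using hY1sub x hx)
        have hsub2 : Y1.Sublist ((ldedup W).reverse.filter (· ∈ σ)) := hfself ▸ hY1.filter _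
        exact hsub2.eq_of_length (by rw [heq, hGlen])
      have hFrev : (ldedup W).reverse.filter (· ∈ σ) = F.reverse := by
        rw [hF, List.filter_reverse]
      have hFlen : F.length = σ.card := by
        have h1 := hGlen
        rw [hFrev, List.length_reverse] at h1
        exact h1
      obtain ⟨b, t, hbt⟩ : ∃ b t, F = b :: t := by
        cases hFc : F with
        | nil => rw [hFc] at hFlen; simp at hFlen; omega
        | cons b t => exact ⟨b, t, rfl⟩
      have hbσ : b ∈ σ := by
        have hbF : b ∈ F := by rw [hbt]; simp
        rw [hF] at hbF
        have := List.mem_filter.mp hbF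
        simpa using this.2
      have hY1' : Y1 = t.reverse ++ [b] := by rw [hY1G, hFrev, hbt, List.reverse_cons]
      have hlent : t.reverse.length = σ.card - 1 := by
        have h1 : t.length + 1 = σ.card := by rw [← hFlen, hbt]; simp
        simp only [List.length_reverse]; omega
      have hSeq : Y.drop (σ.card - 1) = b :: Y2 := by
        rw [hYeq, hY1', List.append_assoc, ← hlent, List.drop_left]
        rfl
      obtain ⟨u, v, hWuv, hu⟩ := ldedup_filter_head _ W b t (hF ▸ hbt)
      have hY2' : Y2.Sublist ((u ++ [b]) ++ v) := by
        rw [List.append_assoc]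
        simpa [← hWuv] using hY2
      obtain ⟨A, B, hAB, hA, hB⟩ := List.sublist_append_iff.mp hY2'
      have hAσ : ∀ x ∈ A, x ∈ σ := fun x hx =>
        hmemσ x (hYeq ▸ List.mem_append_right _ (hAB ▸ List.mem_append_left _ hx))
      have hAb : A.Sublist [b] := by
        have h1 : A.filter (· ∈ σ) = A :=
          List.filter_eq_self.mpr (by intro x hx; simpa using hAσ x hx)
        have h2 : (u ++ [b]).filter (· ∈ σ) = [b] := by
          rw [List.filter_append, List.filter_eq_nil_iff.mpr hu]
          simp [hbσ]
        have h3 : (A.filter (· ∈ σ)).Sublist ((u ++ [b]).filter (· ∈ σ)) := hA.filter _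
        rw [h1, h2] at h3
        exact h3
      rcases List.sublist_singleton.mp hAb with hAnil | hAb1
      · subst hAnil
        simp only [List.nil_append] at hAB
        subst hAB
        refine ⟨b :: Y2, ?_, hSeq ▸ hcol'⟩
        rw [hWuv]
        exact (hB.cons₂ b).trans (List.sublist_append_right u (b :: v))
      · exfalso
        subst hAb1
        have hc1 := hYc 1 (by omega) b hbσ
        rw [one_mul, hSeq, hAB] at hc1
        obtain ⟨k, hk⟩ : ∃ k, σ.card = k + 2 := ⟨σ.card - 2, by omega⟩
        rw [hk] at hc1
        simp [List.count_cons] at hc1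

end Colorful15

theorem statement15 (n d : ℕ) (hd : 1 ≤ d) (Δ : Set (Finset (Fin n)))
    (hΔ : ∀ σ ∈ Δ, ∀ τ ⊆ σ, τ ∈ Δ) (h : ColorfullyRep d Δ) :
    ColorfullyRep (d + 1) Δ := by
  classical
  obtain ⟨W, hW⟩ := h
  refine ⟨(Colorful15.ldedup W).reverse ++ W, fun σ => ⟨fun hσ => ?_, fun hc => ?_⟩⟩
  · obtain ⟨X, hXW, hX⟩ := (hW σ).mp hσ
    exact Colorful15.forward hXW hX
  · exact (hW σ).mpr (Colorful15.backward hc)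
end
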